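/- arXiv:2211.06081 — 12 statements merged into one kernel-verified Lean document; each statement's English description precedes it below -/
import Mathlib

section
/- Let (X,d) be a metric space and ν a finite Borel measure on X. Fix an integer j ≥ 1, a real number λ > 0, and φ ∈ L¹(ν). Let A be the set of all x ∈ X for which there exists k ∈ ℕ such that j·ν(B(x,5^{-(k+1)})) > ν(B(x,5^{-k})) and ∫_{B(x,5^{-(k+1)})} |φ| dν > λ·ν(B(x,5^{-(k+1)})). Then ν(A) ≤ (j/λ)·∫_X |φ| dν (here ν is applied to A as an outer measure; A need not be assumed measurable). -/
open MeasureTheory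
open scoped ENNReal

/-- Weak (1,1) bound for the maximal operator restricted to scales `5^{-k}` at which the
measure is `j`-doubling: the set `A` of points admitting a scale `5^{-(k+1)}` with
`j·ν(B(x,5^{-(k+1)})) > ν(B(x,5^{-k}))` and average of `|φ|` over `B(x,5^{-(k+1)})`
exceeding `λ` has outer measure at most `(j/λ)·∫|φ| dν`. -/
theorem stmt_2 {X : Type*} [MetricSpace X] [MeasurableSpace X] [BorelSpace X]
    (ν : Measure X) [IsFiniteMeasure ν]
    (j : ℕ) (hj : 1 ≤ j) (lam : ℝ) (hlam : 0 < lam)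
    (φ : X → ℝ) (hφ : Integrable φ ν) :
    ν {x : X | ∃ k : ℕ,
        ν (Metric.closedBall x ((1/5 : ℝ) ^ k))
            < (j : ℝ≥0∞) * ν (Metric.closedBall x ((1/5 : ℝ) ^ (k+1))) ∧
        ENNReal.ofReal lam * ν (Metric.closedBall x ((1/5 : ℝ) ^ (k+1)))
            < ∫⁻ y in Metric.closedBall x ((1/5 : ℝ) ^ (k+1)), ENNReal.ofReal |φ y| ∂ν}
      ≤ ((j : ℝ≥0∞) / ENNReal.ofReal lam) * ∫⁻ y, ENNReal.ofReal |φ y| ∂ν := by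
  classical
  set A : Set X := {x : X | ∃ k : ℕ,
        ν (Metric.closedBall x ((1/5 : ℝ) ^ k))
            < (j : ℝ≥0∞) * ν (Metric.closedBall x ((1/5 : ℝ) ^ (k+1))) ∧
        ENNReal.ofReal lam * ν (Metric.closedBall x ((1/5 : ℝ) ^ (k+1)))
            < ∫⁻ y in Metric.closedBall x ((1/5 : ℝ) ^ (k+1)), ENNReal.ofReal |φ y| ∂ν}
    with hA
  set μ : Measure X := ν.withDensity (fun y => ENNReal.ofReal |φ y|) with hμ
  -- radius function
  set r : X → ℝ := fun x => if h : x ∈ A then (1/5 : ℝ) ^ (h.choose + 1) else 0 with hr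
  have hrpos : ∀ a ∈ A, 0 < r a := by
    intro a ha
    simp only [hr, dif_pos ha]
    positivity
  have hrle : ∀ a ∈ A, r a ≤ 1 := by
    intro a ha
    simp only [hr, dif_pos ha]
    exact pow_le_one₀ (by norm_num) (by norm_num)
  obtain ⟨u, hu_sub, hdisj, hcov⟩ :=
    Vitali.exists_disjoint_subfamily_covering_enlargement_closedBall A (fun x => x) r 1 hrle
      5 (by norm_num)
  -- basic facts about balls at points of u
  have hball : ∀ b ∈ A,
      ν (Metric.closedBall b (5 * r b)) ≤ (j : ℝ≥0∞) * ν (Metric.closedBall b (r b)) ∧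
      ENNReal.ofReal lam * ν (Metric.closedBall b (r b)) < μ (Metric.closedBall b (r b)) := by
    intro b hb
    have h := hb.choose_spec
    have h5 : 5 * r b = (1/5 : ℝ) ^ hb.choose := by
      simp only [hr, dif_pos hb]
      rw [pow_succ]
      ring
    have hrb : r b = (1/5 : ℝ) ^ (hb.choose + 1) := by simp [hr, dif_pos hb]
    constructor
    · rw [h5, hrb]; exact h.1.le
    · rw [hrb, hμ, withDensity_apply _ measurableSet_closedBall]
      exact h.2
  -- each ball at points of u has positive ν-measure
  have hpos : ∀ b ∈ u, 0 < ν (Metric.closedBall b (r b)) := by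
    intro b hb
    by_contra h
    push_neg at h
    have h0 : ν (Metric.closedBall b (r b)) = 0 := le_antisymm h zero_le
    have h2 := (hball b (hu_sub hb)).2
    rw [h0, hμ, withDensity_apply _ measurableSet_closedBall] at h2
    rw [setLIntegral_measure_zero _ _ h0] at h2
    simp at h2
  -- u is countable
  have hcount : u.Countable := by
    have := MeasureTheory.Measure.countable_meas_pos_of_disjoint_iUnion
      (μ := ν) (As := fun b : u => Metric.closedBall (b : X) (r b))
      (fun b => measurableSet_closedBall)
      (fun b c hbc => hdisj b.2 c.2 (fun h => hbc (Subtype.ext h)))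
    have hall : {i : u | 0 < ν (Metric.closedBall (i : X) (r i))} = Set.univ := by
      ext b; simp [hpos b b.2]
    rw [hall] at this
    exact Set.countable_coe_iff.mp (Set.countable_univ_iff.mp this)
  have hlam0 : ENNReal.ofReal lam ≠ 0 := by
    simp [ENNReal.ofReal_eq_zero, not_le, hlam]
  have hlamtop : ENNReal.ofReal lam ≠ ∞ := ENNReal.ofReal_ne_top
  -- main chain
  have hAsub : A ⊆ ⋃ b ∈ u, Metric.closedBall b (5 * r b) := by
    intro a ha
    obtain ⟨b, hbu, hsub⟩ := hcov a ha
    exact Set.mem_biUnion hbu (hsub (Metric.mem_closedBall_self (hrpos a ha).le))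
  calc ν A ≤ ν (⋃ b ∈ u, Metric.closedBall b (5 * r b)) := measure_mono hAsub
    _ ≤ ∑' b : u, ν (Metric.closedBall (b : X) (5 * r b)) :=
        measure_biUnion_le ν hcount _
    _ ≤ ∑' b : u, ((j : ℝ≥0∞) / ENNReal.ofReal lam) * μ (Metric.closedBall (b : X) (r b)) := by
        apply ENNReal.tsum_le_tsum
        intro b
        have h1 := (hball b (hu_sub b.2)).1
        have h2 := (hball b (hu_sub b.2)).2.le
        calc ν (Metric.closedBall (b : X) (5 * r b))
            ≤ (j : ℝ≥0∞) * ν (Metric.closedBall (b : X) (r b)) := h1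
          _ ≤ (j : ℝ≥0∞) * ((ENNReal.ofReal lam)⁻¹ * μ (Metric.closedBall (b : X) (r b))) := by
              apply mul_le_mul_right
              calc ν (Metric.closedBall (b : X) (r b))
                  = (ENNReal.ofReal lam)⁻¹ *
                      (ENNReal.ofReal lam * ν (Metric.closedBall (b : X) (r b))) := by
                    rw [← mul_assoc, ENNReal.inv_mul_cancel hlam0 hlamtop, one_mul]
                _ ≤ (ENNReal.ofReal lam)⁻¹ * μ (Metric.closedBall (b : X) (r b)) :=
                    mul_le_mul_right h2 _
          _ = ((j : ℝ≥0∞) / ENNReal.ofReal lam) * μ (Metric.closedBall (b : X) (r b)) := by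
              rw [ENNReal.div_eq_inv_mul]; ring
    _ = ((j : ℝ≥0∞) / ENNReal.ofReal lam) * ∑' b : u, μ (Metric.closedBall (b : X) (r b)) :=
        ENNReal.tsum_mul_left
    _ ≤ ((j : ℝ≥0∞) / ENNReal.ofReal lam) * μ Set.univ := by
        apply mul_le_mul_right
        calc ∑' b : u, μ (Metric.closedBall (b : X) (r b))
            ≤ μ (⋃ b : u, Metric.closedBall (b : X) (r b)) :=
              tsum_meas_le_meas_iUnion_of_disjoint μ (fun b => measurableSet_closedBall)
                (fun b c hbc => hdisj b.2 c.2 (fun h => hbc (Subtype.ext h)))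
          _ ≤ μ Set.univ := measure_mono (Set.subset_univ _)
    _ = ((j : ℝ≥0∞) / ENNReal.ofReal lam) * ∫⁻ y, ENNReal.ofReal |φ y| ∂ν := by
        rw [hμ, withDensity_apply _ MeasurableSet.univ, Measure.restrict_univ]
end

section
/- Let (X,d) be a metric space and ν a finite Borel measure on X such that for ν-almost every x ∈ X one has limsup_{k→∞} ν(B(x,5^{-(k+1)}))/ν(B(x,5^{-k})) > 0. Then for every f ∈ L¹(ν), for ν-almost every x ∈ X there exists a sequence of radii r_k → 0⁺ (depending on x) with ν(B(x,r_k)) > 0 for all k and lim_{k→∞} (1/ν(B(x,r_k))) ∫_{B(x,r_k)} |f(y) − f(x)| dν(y) = 0. -/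
open MeasureTheory Filter
open scoped ENNReal

section Stmt3Aux

open Metric Set

variable {X : Type*} [MetricSpace X] [MeasurableSpace X] [BorelSpace X]

/-- Maximal/covering lemma along scales `5^{-k}`. -/
lemma stmt3_maximal (ν : Measure X) [IsFiniteMeasure ν] (c t : ℝ≥0∞)
    (g : X → ℝ≥0∞) (hg : Measurable g) (S : Set X)
    (hS : ∀ x ∈ S, ∃ k : ℕ,
      c * ν (closedBall x ((1/5 : ℝ) ^ k)) ≤ ν (closedBall x ((1/5 : ℝ) ^ (k+1))) ∧
      t * ν (closedBall x ((1/5 : ℝ) ^ (k+1))) <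
        ∫⁻ y in closedBall x ((1/5 : ℝ) ^ (k+1)), g y ∂ν) :
    c * t * ν S ≤ ∫⁻ y, g y ∂ν := by
  classical
  choose! k hk1 hk2 using hS
  set r : X → ℝ := fun x => (1/5 : ℝ) ^ (k x + 1) with hrdef
  have hr5 : ∀ x : X, 5 * r x = (1/5 : ℝ) ^ (k x) := by
    intro x; simp only [hrdef, pow_succ]; ring
  obtain ⟨u, huS, hdisj, hcov⟩ :=
    Vitali.exists_disjoint_subfamily_covering_enlargement_closedBall S id r 1
      (fun a _ => pow_le_one₀ (by norm_num) (by norm_num)) 5 (by norm_num)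
  simp only [id] at hdisj hcov
  -- small balls at points of S have positive measure
  have hpos : ∀ x ∈ S, 0 < ν (closedBall x (r x)) := by
    intro x hx
    rcases eq_or_ne (ν (closedBall x (r x))) 0 with h0 | h0
    · have := hk2 x hx
      rw [show ((1/5:ℝ)^(k x + 1)) = r x from rfl] at this
      rw [setLIntegral_measure_zero _ _ h0, h0, mul_zero] at this
      exact absurd this (lt_irrefl 0)
    · exact pos_iff_ne_zero.mpr h0
  -- u is countable
  have hucount : u.Countable := by
    have hc := MeasureTheory.Measure.countable_meas_pos_of_disjoint_iUnion
      (μ := ν) (As := fun b : u => closedBall (b : X) (r b))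
      (fun b => measurableSet_closedBall)
      (fun i j hij => hdisj i.2 j.2 (fun h => hij (Subtype.ext h)))
    have : {i : u | 0 < ν (closedBall (i : X) (r i))} = univ := by
      ext i; simpa using hpos i (huS i.2)
    rw [this] at hc
    rw [Set.countable_univ_iff] at hc
    exact Set.countable_coe_iff.mp hc
  -- covering of S by enlarged balls
  have hScov : S ⊆ ⋃ b ∈ u, closedBall b ((1/5:ℝ) ^ (k b)) := by
    intro a ha
    obtain ⟨b, hbu, hsub⟩ := hcov a ha
    refine mem_biUnion hbu ?_
    rw [← hr5 b]
    exact hsub (mem_closedBall_self (by positivity))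
  -- measure chain
  have step1 : ν S ≤ ∑' b : u, ν (closedBall (b : X) ((1/5:ℝ) ^ (k (b : X)))) :=
    (measure_mono hScov).trans (measure_biUnion_le ν hucount _)
  have step2 : ∀ b : u, c * t * ν (closedBall (b : X) ((1/5:ℝ) ^ (k (b : X))))
      ≤ ∫⁻ y in closedBall (b : X) (r (b : X)), g y ∂ν := by
    intro b
    have h1 := hk1 b (huS b.2)
    have h2 := (hk2 b (huS b.2)).le
    calc c * t * ν (closedBall (b : X) ((1/5:ℝ) ^ (k (b : X))))
        = t * (c * ν (closedBall (b : X) ((1/5:ℝ) ^ (k (b : X))))) := by ring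
      _ ≤ t * ν (closedBall (b : X) ((1/5:ℝ) ^ (k (b : X) + 1))) := by
          exact mul_le_mul_right h1 t
      _ ≤ _ := h2
  calc c * t * ν S ≤ ∑' b : u, c * t * ν (closedBall (b : X) ((1/5:ℝ) ^ (k (b : X)))) := by
        calc c * t * ν S ≤ c * t * ∑' b : u, ν (closedBall (b : X) ((1/5:ℝ) ^ (k (b : X)))) :=
              mul_le_mul_right step1 _
          _ = _ := ENNReal.tsum_mul_left.symm
    _ ≤ ∑' b : u, ∫⁻ y in closedBall (b : X) (r (b : X)), g y ∂ν :=
        ENNReal.tsum_le_tsum step2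
    _ = ∑' b : u, (ν.withDensity g) (closedBall (b : X) (r (b : X))) := by
        refine tsum_congr fun b => ?_
        rw [withDensity_apply _ measurableSet_closedBall]
    _ = (ν.withDensity g) (⋃ b ∈ u, closedBall b (r b)) :=
        (measure_biUnion hucount hdisj (fun b _ => measurableSet_closedBall)).symm
    _ ≤ (ν.withDensity g) univ := measure_mono (subset_univ _)
    _ = ∫⁻ y, g y ∂ν := by rw [withDensity_apply _ MeasurableSet.univ, Measure.restrict_univ]

/-- The set of points which are frequently weakly doubling with constant `c` but where
the averages along good scales beyond `K` all exceed `ε` is null. -/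
lemma stmt3_bad_null (ν : Measure X) [IsFiniteMeasure ν] (f : X → ℝ)
    (hfm : StronglyMeasurable f) (hf : Integrable f ν)
    (c : ℝ≥0∞) (hc0 : c ≠ 0) (hctop : c ≠ ∞) (ε : ℝ) (hε : 0 < ε) (K : ℕ) :
    ν {x | (∃ᶠ k in atTop,
        c * ν (closedBall x ((1/5:ℝ)^k)) ≤ ν (closedBall x ((1/5:ℝ)^(k+1)))) ∧
      ∀ k, K ≤ k →
        c * ν (closedBall x ((1/5:ℝ)^k)) ≤ ν (closedBall x ((1/5:ℝ)^(k+1))) →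
        ENNReal.ofReal ε * ν (closedBall x ((1/5:ℝ)^(k+1))) <
          ∫⁻ y in closedBall x ((1/5:ℝ)^(k+1)), ENNReal.ofReal |f y - f x| ∂ν} = 0 := by
  set Bad := {x | (∃ᶠ k in atTop,
        c * ν (closedBall x ((1/5:ℝ)^k)) ≤ ν (closedBall x ((1/5:ℝ)^(k+1)))) ∧
      ∀ k, K ≤ k →
        c * ν (closedBall x ((1/5:ℝ)^k)) ≤ ν (closedBall x ((1/5:ℝ)^(k+1))) →
        ENNReal.ofReal ε * ν (closedBall x ((1/5:ℝ)^(k+1))) <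
          ∫⁻ y in closedBall x ((1/5:ℝ)^(k+1)), ENNReal.ofReal |f y - f x| ∂ν} with hBad
  set ε₃ : ℝ≥0∞ := ENNReal.ofReal (ε/3) with hε₃
  have hε₃0 : ε₃ ≠ 0 := (ENNReal.ofReal_pos.mpr (by linarith)).ne'
  have hε₃top : ε₃ ≠ ∞ := ENNReal.ofReal_ne_top
  -- key bound for every positive η
  have key : ∀ η : ℝ≥0∞, η ≠ 0 → ν Bad ≤ η * ((c * ε₃)⁻¹ + ε₃⁻¹) := by
    intro η hη
    obtain ⟨φ, hφ, hφint⟩ := hf.exists_boundedContinuous_lintegral_sub_le (μ := ν) hη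
    set h : X → ℝ≥0∞ := fun y => ENNReal.ofReal |f y - φ y| with hh
    have hint : ∫⁻ y, h y ∂ν ≤ η := by
      refine le_trans (le_of_eq ?_) hφ
      exact lintegral_congr fun y => (Real.enorm_eq_ofReal_abs _).symm
    have hmeas : Measurable h :=
      ((hfm.measurable.sub φ.continuous.measurable).abs).ennreal_ofReal
    -- Markov part
    have markov : ν {x | ε₃ ≤ h x} ≤ η * ε₃⁻¹ := by
      have := mul_meas_ge_le_lintegral₀ (μ := ν) hmeas.aemeasurable ε₃
      have h2 : ε₃ * ν {x | ε₃ ≤ h x} ≤ η := this.trans hint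
      calc ν {x | ε₃ ≤ h x} = ε₃⁻¹ * (ε₃ * ν {x | ε₃ ≤ h x}) := by
            rw [← mul_assoc, ENNReal.inv_mul_cancel hε₃0 hε₃top, one_mul]
        _ ≤ ε₃⁻¹ * η := mul_le_mul_right h2 _
        _ = η * ε₃⁻¹ := mul_comm _ _
    -- maximal part on Bad ∩ {h < ε₃}
    have hmax : ν (Bad ∩ {x | h x < ε₃}) ≤ η * (c * ε₃)⁻¹ := by
      have happ : ∀ x ∈ Bad ∩ {x | h x < ε₃}, ∃ k : ℕ,
          c * ν (closedBall x ((1/5 : ℝ) ^ k)) ≤ ν (closedBall x ((1/5 : ℝ) ^ (k+1))) ∧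
          ε₃ * ν (closedBall x ((1/5 : ℝ) ^ (k+1))) <
            ∫⁻ y in closedBall x ((1/5 : ℝ) ^ (k+1)), h y ∂ν := by
        rintro x ⟨⟨hfreq, hbig⟩, hx⟩
        -- continuity of φ at x
        obtain ⟨δ, hδ0, hδ⟩ := Metric.continuous_iff.mp φ.continuous x (ε/3) (by linarith)
        obtain ⟨n, hn⟩ := exists_pow_lt_of_lt_one hδ0 (by norm_num : (1/5:ℝ) < 1)
        obtain ⟨k, hkK, hgood⟩ := frequently_atTop.mp hfreq (max K n)
        refine ⟨k, hgood, ?_⟩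
        set B := closedBall x ((1/5:ℝ)^(k+1)) with hB
        have hBδ : ∀ y ∈ B, dist y x < δ := by
          intro y hy
          calc dist y x ≤ (1/5:ℝ)^(k+1) := hy
            _ ≤ (1/5:ℝ)^n := by
                apply pow_le_pow_of_le_one (by norm_num) (by norm_num)
                have : n ≤ k := le_trans (le_max_right _ _) hkK
                omega
            _ < δ := hn
        have hνB : ν B ≠ ∞ := measure_ne_top ν B
        -- pointwise bound on B
        have hptwise : ∀ y ∈ B, ENNReal.ofReal |f y - f x| ≤ h y + (ε₃ + ε₃) := by
          intro y hy
          have tri : |f y - f x| ≤ |f y - φ y| + |φ y - φ x| + |φ x - f x| := by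
            have := abs_sub_le (f y) (φ y) (f x)
            have := abs_sub_le (φ y) (φ x) (f x)
            calc |f y - f x| ≤ |f y - φ y| + |φ y - f x| := abs_sub_le _ _ _
              _ ≤ |f y - φ y| + (|φ y - φ x| + |φ x - f x|) := by
                  gcongr
              _ = _ := by ring
          have h1 : ENNReal.ofReal |φ y - φ x| ≤ ε₃ := by
            rw [hε₃]
            apply ENNReal.ofReal_le_ofReal
            have := hδ y (hBδ y hy)
            rw [Real.dist_eq] at this
            linarith
          have h2 : ENNReal.ofReal |φ x - f x| ≤ ε₃ := by
            rw [abs_sub_comm]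
            exact le_of_lt hx
          calc ENNReal.ofReal |f y - f x|
              ≤ ENNReal.ofReal (|f y - φ y| + |φ y - φ x| + |φ x - f x|) :=
                ENNReal.ofReal_le_ofReal tri
            _ = ENNReal.ofReal |f y - φ y| + ENNReal.ofReal |φ y - φ x|
                + ENNReal.ofReal |φ x - f x| := by
                rw [ENNReal.ofReal_add (by positivity) (abs_nonneg _),
                  ENNReal.ofReal_add (by positivity) (abs_nonneg _)]
            _ ≤ h y + (ε₃ + ε₃) := by
                rw [add_assoc]
                exact add_le_add le_rfl (add_le_add h1 h2)
        have hintB : ∫⁻ y in B, ENNReal.ofReal |f y - f x| ∂ν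
            ≤ (∫⁻ y in B, h y ∂ν) + (ε₃ + ε₃) * ν B := by
          calc ∫⁻ y in B, ENNReal.ofReal |f y - f x| ∂ν
              ≤ ∫⁻ y in B, (h y + (ε₃ + ε₃)) ∂ν := by
                refine lintegral_mono_ae ?_
                exact (ae_restrict_iff' measurableSet_closedBall).mpr
                  (ae_of_all _ hptwise)
            _ = (∫⁻ y in B, h y ∂ν) + (ε₃ + ε₃) * ν B := by
                rw [lintegral_add_right _ measurable_const, setLIntegral_const]
        -- from the large-average hypothesis at scale k
        have hbigk := hbig k (le_trans (le_max_left _ _) hkK) hgood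
        have hsplit : ENNReal.ofReal ε * ν B = ε₃ * ν B + (ε₃ + ε₃) * ν B := by
          have : ENNReal.ofReal ε = ε₃ + (ε₃ + ε₃) := by
            rw [hε₃, ← ENNReal.ofReal_add (by linarith) (by linarith),
              ← ENNReal.ofReal_add (by linarith) (by positivity)]
            congr 1
            ring
          rw [this, add_mul]
        rw [← hB] at hbigk
        rw [hsplit] at hbigk
        have := lt_of_lt_of_le hbigk hintB
        have hfin : (ε₃ + ε₃) * ν B ≠ ∞ :=
          ENNReal.mul_ne_top (by finiteness) hνB
        exact (ENNReal.add_lt_add_iff_right hfin).mp this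
      have := stmt3_maximal ν c ε₃ h hmeas _ happ
      have hle : c * ε₃ * ν (Bad ∩ {x | h x < ε₃}) ≤ η := this.trans hint
      have hcε : c * ε₃ ≠ 0 := by
        simp [hc0, hε₃0]
      have hcεtop : c * ε₃ ≠ ∞ := ENNReal.mul_ne_top hctop hε₃top
      calc ν (Bad ∩ {x | h x < ε₃}) = (c * ε₃)⁻¹ * (c * ε₃ * ν (Bad ∩ {x | h x < ε₃})) := by
            rw [← mul_assoc, ENNReal.inv_mul_cancel hcε hcεtop, one_mul]
        _ ≤ (c * ε₃)⁻¹ * η := mul_le_mul_right hle _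
        _ = η * (c * ε₃)⁻¹ := mul_comm _ _
    -- combine
    have hsub : Bad ⊆ (Bad ∩ {x | h x < ε₃}) ∪ {x | ε₃ ≤ h x} := by
      intro x hx
      rcases lt_or_ge (h x) ε₃ with hlt | hge
      · exact Or.inl ⟨hx, hlt⟩
      · exact Or.inr hge
    calc ν Bad ≤ ν (Bad ∩ {x | h x < ε₃}) + ν {x | ε₃ ≤ h x} :=
          (measure_mono hsub).trans (measure_union_le _ _)
      _ ≤ η * (c * ε₃)⁻¹ + η * ε₃⁻¹ := add_le_add hmax markov
      _ = η * ((c * ε₃)⁻¹ + ε₃⁻¹) := by rw [mul_add]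
  -- conclude via η → 0
  have hA : ((c * ε₃)⁻¹ + ε₃⁻¹) ≠ ∞ := by
    have h1 : (c * ε₃)⁻¹ ≠ ∞ := ENNReal.inv_ne_top.mpr (by simp [hc0, hε₃0])
    have h2 : ε₃⁻¹ ≠ ∞ := ENNReal.inv_ne_top.mpr hε₃0
    finiteness
  have hlim : Tendsto (fun n : ℕ => ((n : ℝ≥0∞))⁻¹ * ((c * ε₃)⁻¹ + ε₃⁻¹)) atTop (nhds 0) := by
    have := ENNReal.Tendsto.mul_const (ENNReal.tendsto_inv_nat_nhds_zero) (Or.inr hA)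
    simpa using this
  have hble : ∀ n : ℕ, ν Bad ≤ ((n : ℝ≥0∞))⁻¹ * ((c * ε₃)⁻¹ + ε₃⁻¹) := by
    intro n
    exact key _ (by simp)
  have := ge_of_tendsto' hlim hble
  exact le_antisymm this zero_le

end Stmt3Aux

section Main
open Metric Set

/-- Lebesgue-type differentiation theorem along a sequence of scales for a (possibly
non-doubling) finite Borel measure which is weakly doubling along the scales `5^{-k}`
at almost every point. -/
theorem stmt_3 {X : Type*} [MetricSpace X] [MeasurableSpace X] [BorelSpace X]
    (ν : Measure X) [IsFiniteMeasure ν]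
    (hdoub : ∀ᵐ x ∂ν, 0 < limsup
      (fun k : ℕ => ν (Metric.closedBall x ((1/5 : ℝ) ^ (k+1))) /
        ν (Metric.closedBall x ((1/5 : ℝ) ^ k))) atTop)
    (f : X → ℝ) (hf : Integrable f ν) :
    ∀ᵐ x ∂ν, ∃ r : ℕ → ℝ, (∀ k, 0 < r k) ∧ Tendsto r atTop (nhds 0) ∧
      (∀ k, 0 < ν (Metric.closedBall x (r k))) ∧
      Tendsto (fun k =>
          (∫⁻ y in Metric.closedBall x (r k), ENNReal.ofReal |f y - f x| ∂ν) /
            ν (Metric.closedBall x (r k)))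
        atTop (nhds 0) := by
  classical
  set f' := hf.1.mk f with hf'def
  have hf'm : StronglyMeasurable f' := hf.1.stronglyMeasurable_mk
  have hff' : f =ᵐ[ν] f' := hf.1.ae_eq_mk
  have hf'int : Integrable f' ν := hf.congr hff'
  have hbad : ∀ m j K : ℕ, ν {x | (∃ᶠ k in atTop,
        ((m:ℝ≥0∞)+1)⁻¹ * ν (closedBall x ((1/5:ℝ)^k)) ≤ ν (closedBall x ((1/5:ℝ)^(k+1)))) ∧
      ∀ k, K ≤ k →
        ((m:ℝ≥0∞)+1)⁻¹ * ν (closedBall x ((1/5:ℝ)^k)) ≤ ν (closedBall x ((1/5:ℝ)^(k+1))) →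
        ENNReal.ofReal (1/((j:ℝ)+1)) * ν (closedBall x ((1/5:ℝ)^(k+1))) <
          ∫⁻ y in closedBall x ((1/5:ℝ)^(k+1)), ENNReal.ofReal |f' y - f' x| ∂ν} = 0 := by
    intro m j K
    refine stmt3_bad_null ν f' hf'm hf'int _ ?_ ?_ _ (by positivity) K
    · simp
    · simp
  have hae : ∀ᵐ x ∂ν, (0 < limsup
      (fun k : ℕ => ν (Metric.closedBall x ((1/5 : ℝ) ^ (k+1))) /
        ν (Metric.closedBall x ((1/5 : ℝ) ^ k))) atTop) ∧ f x = f' x ∧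
      ∀ m j K : ℕ, ¬ ((∃ᶠ k in atTop,
        ((m:ℝ≥0∞)+1)⁻¹ * ν (closedBall x ((1/5:ℝ)^k)) ≤ ν (closedBall x ((1/5:ℝ)^(k+1)))) ∧
      ∀ k, K ≤ k →
        ((m:ℝ≥0∞)+1)⁻¹ * ν (closedBall x ((1/5:ℝ)^k)) ≤ ν (closedBall x ((1/5:ℝ)^(k+1))) →
        ENNReal.ofReal (1/((j:ℝ)+1)) * ν (closedBall x ((1/5:ℝ)^(k+1))) <
          ∫⁻ y in closedBall x ((1/5:ℝ)^(k+1)), ENNReal.ofReal |f' y - f' x| ∂ν) := by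
    refine hdoub.and (hff'.and ?_)
    rw [ae_all_iff]
    intro m
    rw [ae_all_iff]
    intro j
    rw [ae_all_iff]
    intro K
    exact (measure_eq_zero_iff_ae_notMem).mp (hbad m j K)
  filter_upwards [hae] with x hx
  obtain ⟨hls, hfx, hnb⟩ := hx
  -- positivity of all dyadic balls at x
  have hpos : ∀ k : ℕ, 0 < ν (closedBall x ((1/5:ℝ)^k)) := by
    by_contra hcon
    push_neg at hcon
    obtain ⟨k₀, hk₀⟩ := hcon
    have hk₀0 : ν (closedBall x ((1/5:ℝ)^k₀)) = 0 := le_antisymm hk₀ zero_le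
    have hev : ∀ᶠ k : ℕ in atTop, (ν (closedBall x ((1/5:ℝ)^(k+1))) /
        ν (closedBall x ((1/5:ℝ)^k))) ≤ 0 := by
      filter_upwards [eventually_ge_atTop k₀] with k hk
      have hsmall : ν (closedBall x ((1/5:ℝ)^(k+1))) = 0 := by
        refine measure_mono_null (closedBall_subset_closedBall ?_) hk₀0
        apply pow_le_pow_of_le_one (by norm_num) (by norm_num)
        omega
      rw [hsmall, ENNReal.zero_div]
    have : limsup (fun k : ℕ => ν (Metric.closedBall x ((1/5 : ℝ) ^ (k+1))) /
        ν (Metric.closedBall x ((1/5 : ℝ) ^ k))) atTop ≤ 0 := limsup_le_of_le (by isBoundedDefault) hev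
    exact absurd (lt_of_lt_of_le hls this) (lt_irrefl _)
  -- choose the doubling constant
  obtain ⟨n, hn⟩ := ENNReal.exists_inv_nat_lt hls.ne'
  have hn0 : n ≠ 0 := by
    rintro rfl
    simp only [Nat.cast_zero, ENNReal.inv_zero] at hn
    exact absurd hn (not_top_lt)
  set m := n - 1 with hm
  have hmn : ((m:ℝ≥0∞)+1) = (n:ℝ≥0∞) := by
    have h : m + 1 = n := by omega
    rw [← h]
    norm_cast
  set c : ℝ≥0∞ := ((m:ℝ≥0∞)+1)⁻¹ with hc
  have hcls : c < limsup (fun k : ℕ => ν (Metric.closedBall x ((1/5 : ℝ) ^ (k+1))) /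
      ν (Metric.closedBall x ((1/5 : ℝ) ^ k))) atTop := by
    rw [hc, hmn]; exact hn
  have hfreq : ∃ᶠ k in atTop,
      c * ν (closedBall x ((1/5:ℝ)^k)) ≤ ν (closedBall x ((1/5:ℝ)^(k+1))) := by
    refine (frequently_lt_of_lt_limsup (by isBoundedDefault) hcls).mono fun k hk => ?_
    have hb0 : ν (closedBall x ((1/5:ℝ)^k)) ≠ 0 := (hpos k).ne'
    have hbt : ν (closedBall x ((1/5:ℝ)^k)) ≠ ∞ := measure_ne_top _ _
    calc c * ν (closedBall x ((1/5:ℝ)^k))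
        ≤ (ν (closedBall x ((1/5:ℝ)^(k+1))) / ν (closedBall x ((1/5:ℝ)^k)))
            * ν (closedBall x ((1/5:ℝ)^k)) := mul_le_mul_left hk.le _
      _ = ν (closedBall x ((1/5:ℝ)^(k+1))) := ENNReal.div_mul_cancel hb0 hbt
  -- for every j find a good scale past j with small average
  have hsel : ∀ j : ℕ, ∃ k : ℕ, j ≤ k ∧
      (∫⁻ y in closedBall x ((1/5:ℝ)^(k+1)), ENNReal.ofReal |f' y - f' x| ∂ν) ≤
        ENNReal.ofReal (1/((j:ℝ)+1)) * ν (closedBall x ((1/5:ℝ)^(k+1))) := by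
    intro j
    have hnbj := hnb m j j
    rw [not_and] at hnbj
    have := hnbj hfreq
    push_neg at this
    obtain ⟨k, hk1, _, hk3⟩ := this
    exact ⟨k, hk1, hk3⟩
  choose k hk1 hk2 using hsel
  refine ⟨fun j => (1/5:ℝ)^(k j + 1), fun j => by positivity, ?_, fun j => hpos (k j + 1), ?_⟩
  · refine tendsto_of_tendsto_of_tendsto_of_le_of_le (g := fun _ : ℕ => (0:ℝ))
      (h := fun j : ℕ => (1/5:ℝ)^j) tendsto_const_nhds
      (tendsto_pow_atTop_nhds_zero_of_lt_one (by norm_num) (by norm_num))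
      (fun j => by positivity) ?_
    intro j
    apply pow_le_pow_of_le_one (by norm_num) (by norm_num)
    have := hk1 j
    omega
  · have heq : ∀ j : ℕ, (∫⁻ y in closedBall x ((1/5:ℝ)^(k j + 1)),
        ENNReal.ofReal |f y - f x| ∂ν) = ∫⁻ y in closedBall x ((1/5:ℝ)^(k j + 1)),
        ENNReal.ofReal |f' y - f' x| ∂ν := by
      intro j
      refine lintegral_congr_ae (ae_restrict_of_ae ?_)
      filter_upwards [hff'] with y hy
      simp only [hy, hfx]
    refine tendsto_of_tendsto_of_tendsto_of_le_of_le (g := fun _ : ℕ => (0:ℝ≥0∞))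
      (h := fun j : ℕ => ENNReal.ofReal (1/((j:ℝ)+1))) tendsto_const_nhds
      ?_ (fun j => zero_le) ?_
    · have := ENNReal.tendsto_ofReal (tendsto_one_div_add_atTop_nhds_zero_nat)
      simpa using this
    · intro j
      show (∫⁻ y in closedBall x ((1/5:ℝ)^(k j + 1)), ENNReal.ofReal |f y - f x| ∂ν) /
          ν (closedBall x ((1/5:ℝ)^(k j + 1))) ≤ ENNReal.ofReal (1/((j:ℝ)+1))
      rw [heq j]
      exact ENNReal.div_le_of_le_mul (hk2 j)

end Main
end

section
/- Let (X,d) be a metric space in which every pair of points is joined by a geodesic, i.e., for all x, y ∈ X there exists a map γ : [0, d(x,y)] → X with γ(0) = x, γ(d(x,y)) = y and d(γ(s),γ(t)) = |s − t| for all s,t. Let K ⊂ ℝ be a compact set of positive Lebesgue measure and let γ : K → X be a 1-Lipschitz map. Then for every ε > 0 there exist finitely many closed intervals I_1, …, I_N ⊂ ℝ and a 1-Lipschitz map γ̃ : I_1 ∪ … ∪ I_N → X such that: (i) K ⊆ I_1 ∪ … ∪ I_N and the Lebesgue measure of (I_1 ∪ … ∪ I_N) \ K is less than ε·L¹(K);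 (ii) γ̃ restricted to K equals γ. -/
open MeasureTheory

lemma stmt4_min_lip (a b c : ℝ) : |min a c - min b c| ≤ |a - b| := by
  rw [abs_sub_le_iff]
  constructor
  · rcases min_cases b c with ⟨h, _⟩ | ⟨h, _⟩
    · linarith [min_le_left a c, le_abs_self (a - b)]
    · linarith [min_le_right a c, abs_nonneg (a - b)]
  · rcases min_cases a c with ⟨h, _⟩ | ⟨h, _⟩
    · linarith [min_le_left b c, le_abs_self (b - a), abs_sub_comm a b]
    · linarith [min_le_right b c, abs_nonneg (a - b)]

theorem stmt4_extend {X : Type*} [MetricSpace X]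
    (hgeo : ∀ x y : X, ∃ γ : ℝ → X, γ 0 = x ∧ γ (dist x y) = y ∧
      ∀ s ∈ Set.Icc (0:ℝ) (dist x y), ∀ t ∈ Set.Icc (0:ℝ) (dist x y),
        dist (γ s) (γ t) = |s - t|)
    (K : Set ℝ) (hK : IsCompact K) (hne : K.Nonempty)
    (γ : ℝ → X) (hγ : LipschitzOnWith 1 γ K) :
    ∃ γ' : ℝ → X, LipschitzWith 1 γ' ∧ Set.EqOn γ' γ K := by
  classical
  choose g g0 gd giso using hgeo
  have hγ' : ∀ x ∈ K, ∀ y ∈ K, dist (γ x) (γ y) ≤ dist x y := by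
    intro x hx y hy
    have := (lipschitzOnWith_iff_dist_le_mul.1 hγ) x hx y hy
    simpa using this
  set m : ℝ := sInf K with hm
  set M : ℝ := sSup K with hM
  have hmK : m ∈ K := hK.sInf_mem hne
  have hMK : M ∈ K := hK.sSup_mem hne
  have hmM : m ≤ M := le_csSup hK.bddAbove hmK
  set P : ℝ → ℝ := fun t => sSup (K ∩ Set.Iic t) with hP
  set Q : ℝ → ℝ := fun t => sInf (K ∩ Set.Ici t) with hQ
  -- basic facts
  have hPmem : ∀ u, u ∈ Set.Icc m M → P u ∈ K ∧ P u ≤ u := by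
    intro u hu
    have hcompact : IsCompact (K ∩ Set.Iic u) := hK.inter_right isClosed_Iic
    have hne' : (K ∩ Set.Iic u).Nonempty := ⟨m, hmK, hu.1⟩
    have := hcompact.sSup_mem hne'
    exact ⟨this.1, this.2⟩
  have hQmem : ∀ u, u ∈ Set.Icc m M → Q u ∈ K ∧ u ≤ Q u := by
    intro u hu
    have hcompact : IsCompact (K ∩ Set.Ici u) := hK.inter_right isClosed_Ici
    have hne' : (K ∩ Set.Ici u).Nonempty := ⟨M, hMK, hu.2⟩
    have := hcompact.sInf_mem hne'
    exact ⟨this.1, this.2⟩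
  have hPub : ∀ u, ∀ k ∈ K, k ≤ u → k ≤ P u := by
    intro u k hk hku
    exact le_csSup (hK.inter_right isClosed_Iic).bddAbove ⟨hk, hku⟩
  have hQlb : ∀ u, ∀ k ∈ K, u ≤ k → Q u ≤ k := by
    intro u k hk hku
    exact csInf_le (hK.inter_right isClosed_Ici).bddBelow ⟨hk, hku⟩
  have hPK : ∀ u ∈ K, P u = u := by
    intro u hu
    have h1 : P u ≤ u := csSup_le ⟨u, hu, le_refl u⟩ (fun k hk => hk.2)
    exact le_antisymm h1 (hPub u u hu le_rfl)
  have hQK : ∀ u ∈ K, Q u = u := by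
    intro u hu
    have h1 : u ≤ Q u := le_csInf ⟨u, hu, le_refl u⟩ (fun k hk => hk.2)
    exact le_antisymm (hQlb u u hu le_rfl) h1
  set F : ℝ → X :=
    fun u => g (γ (P u)) (γ (Q u)) (min (u - P u) (dist (γ (P u)) (γ (Q u)))) with hF
  have hFK : ∀ u ∈ K, F u = γ u := by
    intro u hu
    simp only [hF, hPK u hu, hQK u hu, sub_self, dist_self, min_self]
    exact g0 _ _
  -- endpoint identities for F on [m, M]
  have hFleft : ∀ u ∈ Set.Icc m M, dist (γ (P u)) (F u) ≤ u - P u := by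
    intro u hu
    have hPu := hPmem u hu
    have hQu := hQmem u hu
    set D := dist (γ (P u)) (γ (Q u)) with hD
    have hD0 : 0 ≤ D := dist_nonneg
    have hup : 0 ≤ u - P u := by linarith [hPu.2]
    have hmin : min (u - P u) D ∈ Set.Icc 0 D :=
      ⟨le_min hup hD0, min_le_right _ _⟩
    have h0 : (0:ℝ) ∈ Set.Icc 0 D := ⟨le_rfl, hD0⟩
    have := giso (γ (P u)) (γ (Q u)) 0 h0 _ hmin
    rw [g0] at this
    calc dist (γ (P u)) (F u) = |0 - min (u - P u) D| := this
      _ = min (u - P u) D := by rw [zero_sub, abs_neg, abs_of_nonneg hmin.1]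
      _ ≤ u - P u := min_le_left _ _
  have hFright : ∀ u ∈ Set.Icc m M, dist (F u) (γ (Q u)) ≤ Q u - u := by
    intro u hu
    have hPu := hPmem u hu
    have hQu := hQmem u hu
    set D := dist (γ (P u)) (γ (Q u)) with hD
    have hD0 : 0 ≤ D := dist_nonneg
    have hDle : D ≤ Q u - P u := by
      have := hγ' _ hPu.1 _ hQu.1
      rw [Real.dist_eq, abs_of_nonpos (by linarith [hPu.2, hQu.2])] at this
      linarith
    have hup : 0 ≤ u - P u := by linarith [hPu.2]
    have hmin : min (u - P u) D ∈ Set.Icc 0 D :=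
      ⟨le_min hup hD0, min_le_right _ _⟩
    have hDD : D ∈ Set.Icc 0 D := ⟨hD0, le_rfl⟩
    have := giso (γ (P u)) (γ (Q u)) _ hmin D hDD
    rw [gd] at this
    calc dist (F u) (γ (Q u)) = |min (u - P u) D - D| := this
      _ = D - min (u - P u) D := by
          rw [abs_of_nonpos (by linarith [hmin.2])]; ring
      _ ≤ Q u - u := by
          rcases min_cases (u - P u) D with ⟨h1, _⟩ | ⟨h1, _⟩ <;>
            [linarith; linarith]
  -- key estimate
  have key : ∀ u ∈ Set.Icc m M, ∀ v ∈ Set.Icc m M, u ≤ v →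
      dist (F u) (F v) ≤ v - u := by
    intro u hu v hv huv
    by_cases hcase : Q u ≤ P v
    · have h1 := hFright u hu
      have h2 := hFleft v hv
      have h3 : dist (γ (Q u)) (γ (P v)) ≤ P v - Q u := by
        have := hγ' _ (hQmem u hu).1 _ (hPmem v hv).1
        rw [Real.dist_eq, abs_of_nonpos (by linarith)] at this
        linarith
      calc dist (F u) (F v)
          ≤ dist (F u) (γ (Q u)) + dist (γ (Q u)) (γ (P v)) + dist (γ (P v)) (F v) :=
            dist_triangle4 _ _ _ _
        _ ≤ (Q u - u) + (P v - Q u) + (v - P v) := by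
            gcongr
        _ = v - u := by ring
    · push_neg at hcase
      -- same gap : P u = P v and Q u = Q v
      have hsetP : K ∩ Set.Iic v = K ∩ Set.Iic u := by
        ext k
        constructor
        · rintro ⟨hk, hkv⟩
          refine ⟨hk, Set.mem_Iic.mpr ?_⟩
          by_contra hku
          push_neg at hku
          have h1 : Q u ≤ k := hQlb u k hk hku.le
          have h2 : k ≤ P v := hPub v k hk hkv
          linarith
        · rintro ⟨hk, hku⟩
          exact ⟨hk, le_trans hku huv⟩
      have hsetQ : K ∩ Set.Ici u = K ∩ Set.Ici v := by
        ext k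
        constructor
        · rintro ⟨hk, hku⟩
          refine ⟨hk, Set.mem_Ici.mpr ?_⟩
          by_contra hkv
          push_neg at hkv
          have h1 : Q u ≤ k := hQlb u k hk hku
          have h2 : k ≤ P v := hPub v k hk hkv.le
          linarith
        · rintro ⟨hk, hkv⟩
          exact ⟨hk, le_trans huv hkv⟩
      have hPuv : P v = P u := by rw [hP]; simp only; rw [hsetP]
      have hQuv : Q u = Q v := by rw [hQ]; simp only; rw [hsetQ]
      have hPu := hPmem u hu
      have hQv := hQmem v hv
      set D := dist (γ (P u)) (γ (Q u)) with hD
      have hD0 : 0 ≤ D := dist_nonneg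
      have hup : 0 ≤ u - P u := by linarith [hPu.2]
      have hvp : 0 ≤ v - P u := by linarith
      have hmin1 : min (u - P u) D ∈ Set.Icc 0 D := ⟨le_min hup hD0, min_le_right _ _⟩
      have hmin2 : min (v - P u) D ∈ Set.Icc 0 D := ⟨le_min hvp hD0, min_le_right _ _⟩
      have hiso := giso (γ (P u)) (γ (Q u)) _ hmin1 _ hmin2
      have hFu : F u = g (γ (P u)) (γ (Q u)) (min (u - P u) D) := rfl
      have hFv : F v = g (γ (P u)) (γ (Q u)) (min (v - P u) D) := by
        show g (γ (P v)) (γ (Q v)) (min (v - P v) (dist (γ (P v)) (γ (Q v)))) = _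
        rw [hPuv, ← hQuv]
      rw [hFu, hFv, hiso]
      calc |min (u - P u) D - min (v - P u) D| ≤ |(u - P u) - (v - P u)| :=
            stmt4_min_lip _ _ _
        _ = v - u := by rw [abs_of_nonpos (by linarith)]; ring
  -- clamp
  set c : ℝ → ℝ := fun t => max m (min t M) with hc
  have hcmem : ∀ t, c t ∈ Set.Icc m M := by
    intro t
    refine ⟨le_max_left _ _, max_le hmM (min_le_right _ _)⟩
  have hcmono : Monotone c := fun s t hst =>
    max_le_max le_rfl (min_le_min hst le_rfl)
  have hclip : ∀ s t : ℝ, s ≤ t → c t - c s ≤ t - s := by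
    intro s t hst
    have hminc : min t M ≤ min s M + (t - s) := by
      rcases min_cases s M with ⟨h, _⟩ | ⟨h, _⟩
      · linarith [min_le_left t M]
      · linarith [min_le_right t M]
    have hmaxc : max m (min t M) ≤ max m (min s M) + (t - s) :=
      max_le (by linarith [le_max_left m (min s M)])
        (by linarith [le_max_right m (min s M)])
    simp only [hc]
    linarith [hmaxc]
  have hcK : ∀ t ∈ K, c t = t := by
    intro t ht
    have h1 : m ≤ t := csInf_le hK.bddBelow ht
    have h2 : t ≤ M := le_csSup hK.bddAbove ht
    simp [hc, min_eq_left h2, max_eq_right, h1]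
  refine ⟨F ∘ c, ?_, ?_⟩
  · apply LipschitzWith.of_dist_le_mul
    intro s t
    rw [NNReal.coe_one, one_mul]
    rcases le_total s t with hst | hst
    · have h1 := key (c s) (hcmem s) (c t) (hcmem t) (hcmono hst)
      have h2 := hclip s t hst
      calc dist ((F ∘ c) s) ((F ∘ c) t) = dist (F (c s)) (F (c t)) := rfl
        _ ≤ c t - c s := h1
        _ ≤ t - s := h2
        _ ≤ |s - t| := by rw [abs_sub_comm]; exact le_abs_self _
        _ = dist s t := (Real.dist_eq s t).symm
    · have h1 := key (c t) (hcmem t) (c s) (hcmem s) (hcmono hst)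
      have h2 := hclip t s hst
      calc dist ((F ∘ c) s) ((F ∘ c) t) = dist (F (c t)) (F (c s)) := dist_comm _ _
        _ ≤ c s - c t := h1
        _ ≤ s - t := h2
        _ ≤ |s - t| := le_abs_self _
        _ = dist s t := (Real.dist_eq s t).symm
  · intro t ht
    simp only [Function.comp_apply, hcK t ht]
    exact hFK t ht

/-- Extension of Lipschitz fragments: a `1`-Lipschitz curve defined on a compact subset of the
line with values in a geodesic metric space extends to a `1`-Lipschitz curve on a finite union
of closed intervals covering the compact set up to arbitrarily small relative measure. -/
theorem stmt_4 {X : Type*} [MetricSpace X]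
    (hgeo : ∀ x y : X, ∃ γ : ℝ → X, γ 0 = x ∧ γ (dist x y) = y ∧
      ∀ s ∈ Set.Icc (0:ℝ) (dist x y), ∀ t ∈ Set.Icc (0:ℝ) (dist x y),
        dist (γ s) (γ t) = |s - t|)
    (K : Set ℝ) (hK : IsCompact K) (hKpos : 0 < volume K)
    (γ : ℝ → X) (hγ : LipschitzOnWith 1 γ K) :
    ∀ ε > (0:ℝ), ∃ (N : ℕ) (a b : Fin N → ℝ),
      (∀ i, a i ≤ b i) ∧
      K ⊆ ⋃ i, Set.Icc (a i) (b i) ∧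
      volume ((⋃ i, Set.Icc (a i) (b i)) \ K) < ENNReal.ofReal ε * volume K ∧
      ∃ γ' : ℝ → X, LipschitzOnWith 1 γ' (⋃ i, Set.Icc (a i) (b i)) ∧ Set.EqOn γ' γ K := by
  intro ε hε
  have hne : K.Nonempty := by
    rcases Set.eq_empty_or_nonempty K with h | h
    · simp [h] at hKpos
    · exact h
  -- the extended curve
  obtain ⟨γ', hγ'lip, hγ'eq⟩ := stmt4_extend hgeo K hK hne γ hγ
  -- target bound
  set δ : ENNReal := ENNReal.ofReal ε * volume K with hδ
  have hδpos : δ ≠ 0 :=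
    (ENNReal.mul_pos (ENNReal.ofReal_pos.mpr hε).ne' hKpos.ne').ne'
  -- open set U ⊇ K with small excess measure
  obtain ⟨U, hKU, hUopen, _, hUK⟩ :=
    hK.measurableSet.exists_isOpen_diff_lt (μ := volume) hK.measure_lt_top.ne hδpos
  -- for each x ∈ K pick a radius
  have hrad : ∀ x ∈ K, ∃ r > (0:ℝ), Set.Icc (x - r) (x + r) ⊆ U := by
    intro x hx
    obtain ⟨r, hr, hball⟩ := Metric.isOpen_iff.1 hUopen x (hKU hx)
    refine ⟨r / 2, by linarith, fun z hz => hball ?_⟩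
    rw [Metric.mem_ball, Real.dist_eq, abs_sub_lt_iff]
    constructor <;> [linarith [hz.2]; linarith [hz.1]]
  choose! r hr hrU using hrad
  -- compact subcover by open balls of radius r x
  obtain ⟨t, htK, htcov⟩ := hK.elim_nhds_subcover (fun x => Metric.ball x (r x))
    (fun x hx => Metric.ball_mem_nhds x (hr x hx))
  -- index by Fin t.card
  set e := t.equivFin with he
  refine ⟨t.card, fun i => (e.symm i : ℝ) - r (e.symm i), fun i => (e.symm i : ℝ) + r (e.symm i),
    ?_, ?_, ?_, ?_⟩
  · intro i
    have := hr _ (htK _ (e.symm i).2)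
    dsimp only
    linarith
  · intro x hx
    obtain ⟨y, hy, hxy⟩ := Set.mem_iUnion₂.1 (htcov hx)
    rw [Metric.mem_ball, Real.dist_eq, abs_sub_lt_iff] at hxy
    refine Set.mem_iUnion.2 ⟨e ⟨y, hy⟩, ?_⟩
    simp only [Equiv.symm_apply_apply]
    exact ⟨by linarith [hxy.1], by linarith [hxy.2]⟩
  · refine lt_of_le_of_lt (measure_mono (Set.diff_subset_diff_left ?_)) hUK
    refine Set.iUnion_subset fun i => ?_
    exact hrU _ (htK _ (e.symm i).2)
  · exact ⟨γ', hγ'lip.lipschitzOnWith, hγ'eq⟩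
end

section
/- Let n ≥ 2, let K ⊂ ℝ be a compact set, let γ : K → ℝ^n be a Lipschitz map, and let η be a nonnegative Radon measure on ℝ^n. Then for every δ > 0, for Lebesgue-almost every vector v in the closed Euclidean ball B(0,δ) ⊂ ℝ^n, the measures η and H^1⌞(v + γ(K)) are mutually singular, where v + γ(K) = { v + γ(t) : t ∈ K } is the translated image of the curve. -/
open MeasureTheory
open scoped NNReal

/-- Generic translates of a Lipschitz curve are singular with respect to a given Radon
measure: for a.e. `v ∈ B(0,δ)`, the measures `η` and `H¹⌞(v + γ(K))` are mutually singular. -/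
theorem stmt_5 {n : ℕ} (hn : 2 ≤ n) (K : Set ℝ) (hK : IsCompact K)
    (γ : ℝ → EuclideanSpace ℝ (Fin n)) (hγ : ∃ L : ℝ≥0, LipschitzOnWith L γ K)
    (η : Measure (EuclideanSpace ℝ (Fin n))) [IsFiniteMeasureOnCompacts η] :
    ∀ δ > (0:ℝ),
      ∀ᵐ v ∂(volume.restrict (Metric.closedBall (0 : EuclideanSpace ℝ (Fin n)) δ)),
        η ⟂ₘ (μH[1]).restrict ((fun t => v + γ t) '' K) := by
  obtain ⟨L, hL⟩ := hγ
  intro δ hδ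
  set S : Set (EuclideanSpace ℝ (Fin n)) := γ '' K with hSdef
  have hScomp : IsCompact S := hK.image_of_continuousOn hL.continuousOn
  have hSmeas : MeasurableSet S := hScomp.isClosed.measurableSet
  -- `μH[1] S` is finite
  have h1fin : μH[1] S ≠ ⊤ := by
    have h1 : μH[1] S ≤ ((L : ENNReal)) ^ (1:ℝ) * μH[1] K :=
      hL.hausdorffMeasure_image_le zero_le_one
    have h2 : (μH[1] : Measure ℝ) K = volume K := by
      rw [MeasureTheory.hausdorffMeasure_real]
    refine ne_top_of_le_ne_top ?_ h1
    rw [h2]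
    exact ENNReal.mul_ne_top (by simp) hK.measure_lt_top.ne
  -- `μH[n] S = 0`
  have hn0 : μH[(n:ℝ)] S = 0 := by
    have h1n : (1:ℝ) < (n:ℝ) := by exact_mod_cast lt_of_lt_of_le one_lt_two hn
    rcases MeasureTheory.Measure.hausdorffMeasure_zero_or_top h1n S with h | h
    · exact h
    · exact absurd h h1fin
  -- `volume S = 0`
  have hvolS : volume S = 0 := by
    set e := (MeasurableEquiv.toLp 2 (Fin n → ℝ)).symm
    have h1 : volume S = volume (e '' S) := by
      rw [MeasurableEquiv.image_eq_preimage_symm]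
      exact (((EuclideanSpace.volume_preserving_symm_measurableEquiv_toLp (Fin n)).symm e).measure_preimage
        hSmeas.nullMeasurableSet).symm
    have h2 : volume (e '' S) = μH[(n:ℝ)] (e '' S) := by
      rw [← MeasureTheory.hausdorffMeasure_pi_real (ι := Fin n)]
      simp
    have h3 : μH[(n:ℝ)] (e '' S) ≤ (1 : ENNReal) ^ (n:ℝ) * μH[(n:ℝ)] S := by
      have hlip : LipschitzWith 1 ⇑e := by
        rw [MeasurableEquiv.coe_toLp_symm]
        exact PiLp.lipschitzWith_ofLp 2 _
      exact hlip.hausdorffMeasure_image_le (by positivity) S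
    rw [h1, h2]
    simpa [hn0] using h3
  -- Fubini: for a.e. `v`, `η {x | x - v ∈ S} = 0`
  have key : ∀ᵐ v ∂(volume : Measure (EuclideanSpace ℝ (Fin n))),
      η {x | x - v ∈ S} = 0 := by
    set s : Set (EuclideanSpace ℝ (Fin n) × EuclideanSpace ℝ (Fin n)) :=
      {p | p.2 - p.1 ∈ S} with hsdef
    have hs : MeasurableSet s := (measurable_snd.sub measurable_fst) hSmeas
    have hmeas : Measurable fun v => η (Prod.mk v ⁻¹' s) :=
      measurable_measure_prodMk_left hs
    have hpre : ∀ v, Prod.mk v ⁻¹' s = {x | x - v ∈ S} := fun v => rfl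
    have hint : ∫⁻ v, η (Prod.mk v ⁻¹' s) ∂volume = 0 := by
      have step1 : ∀ v, η (Prod.mk v ⁻¹' s)
          = ∫⁻ x, S.indicator (fun _ => (1:ENNReal)) (x - v) ∂η := by
        intro v
        have hms : MeasurableSet ((fun x => x - v) ⁻¹' S) := (measurable_sub_const v) hSmeas
        have h2 : ∫⁻ x, S.indicator (fun _ => (1:ENNReal)) (x - v) ∂η
            = ∫⁻ x, ((fun x => x - v) ⁻¹' S).indicator (fun _ => (1:ENNReal)) x ∂η := rfl
        rw [h2, lintegral_indicator hms, setLIntegral_one, hpre v]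
        rfl
      have swap : ∫⁻ v, ∫⁻ x, S.indicator (fun _ => (1:ENNReal)) (x - v) ∂η ∂volume
          = ∫⁻ x, ∫⁻ v, S.indicator (fun _ => (1:ENNReal)) (x - v) ∂volume ∂η := by
        apply lintegral_lintegral_swap
        exact ((measurable_const.indicator hSmeas).comp
          (measurable_snd.sub measurable_fst)).aemeasurable
      have inner : ∀ x : EuclideanSpace ℝ (Fin n),
          ∫⁻ v, S.indicator (fun _ => (1:ENNReal)) (x - v) ∂volume = 0 := by
        intro x
        have hms : MeasurableSet ((fun v => x - v) ⁻¹' S) := (measurable_const_sub x) hSmeas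
        have h2 : ∫⁻ v, S.indicator (fun _ => (1:ENNReal)) (x - v) ∂volume
            = ∫⁻ v, ((fun v => x - v) ⁻¹' S).indicator (fun _ => (1:ENNReal)) v ∂volume := rfl
        rw [h2, lintegral_indicator hms, setLIntegral_one,
          (Measure.measurePreserving_sub_left volume x).measure_preimage hSmeas.nullMeasurableSet]
        exact hvolS
      simp only [step1, swap]
      simp [inner]
    have := (lintegral_eq_zero_iff hmeas).1 hint
    filter_upwards [this] with v hv
    rw [← hpre v]
    exact hv
  have key' := ae_restrict_of_ae
    (μ := (volume : Measure (EuclideanSpace ℝ (Fin n))))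
    (s := Metric.closedBall (0 : EuclideanSpace ℝ (Fin n)) δ) key
  filter_upwards [key'] with v hv
  have himg : (fun t => v + γ t) '' K = {x | x - v ∈ S} := by
    ext x
    constructor
    · rintro ⟨t, ht, rfl⟩
      simp only [Set.mem_setOf_eq, add_sub_cancel_left]
      exact ⟨t, ht, rfl⟩
    · rintro ⟨t, ht, hts⟩
      refine ⟨t, ht, ?_⟩
      show v + γ t = x
      rw [hts]
      abel
  have hTmeas : MeasurableSet ((fun t => v + γ t) '' K) := by
    rw [himg]
    exact (measurable_sub_const v) hSmeas
  refine ⟨(fun t => v + γ t) '' K, hTmeas, ?_, ?_⟩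
  · rw [himg]; exact hv
  · rw [Measure.restrict_apply hTmeas.compl, Set.compl_inter_self, measure_empty]
end

section
/- Let K ⊂ ℝ be a compact set, γ : K → ℝ^n a Lipschitz map, δ > 0, and u : ℝ^n × ℝ^n → [0,∞] a nonnegative Borel function. For a Borel set A ⊆ ℝ^n define μ_{γ,u}(A) := ∫_{B(0,δ)} ( ∫_A u(v, x − v) d(H^1⌞(v + γ(K)))(x) ) dv, where the outer integral is with respect to the Lebesgue measure on ℝ^n. Then μ_{γ,u} is absolutely continuous with respect to the n-dimensional Lebesgue measure: for every Borel set A with L^n(A) = 0 one has μ_{γ,u}(A) = 0. -/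
open MeasureTheory
open scoped NNReal ENNReal

/-- The measure `A ↦ ∫_{B(0,δ)} ∫_A u(v, x−v) d(H¹⌞(v+γ(K)))(x) dv`, obtained by integrating a
nonnegative Borel density over all translates of a Lipschitz curve, is absolutely continuous
with respect to the Lebesgue measure. -/
theorem stmt_6 {n : ℕ} (K : Set ℝ) (hK : IsCompact K)
    (γ : ℝ → EuclideanSpace ℝ (Fin n)) (hγ : ∃ L : ℝ≥0, LipschitzOnWith L γ K)
    (δ : ℝ) (hδ : 0 < δ)
    (u : EuclideanSpace ℝ (Fin n) → EuclideanSpace ℝ (Fin n) → ℝ≥0∞)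
    (hu : Measurable (Function.uncurry u)) :
    ∀ A : Set (EuclideanSpace ℝ (Fin n)), MeasurableSet A → volume A = 0 →
      ∫⁻ v in Metric.closedBall (0 : EuclideanSpace ℝ (Fin n)) δ,
        (∫⁻ x in A, u v (x - v) ∂((μH[1]).restrict ((fun t => v + γ t) '' K))) ∂volume = 0 := by
  intro A hA hA0
  obtain ⟨L, hL⟩ := hγ
  have hKm : MeasurableSet K := hK.measurableSet
  -- γ is a.e. measurable on K
  have hγae : AEMeasurable γ (volume.restrict K) :=
    hL.continuousOn.aemeasurable hKm
  -- the translated maps are Lipschitz on K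
  have hfLip : ∀ v : EuclideanSpace ℝ (Fin n), LipschitzOnWith L (fun t => v + γ t) K := by
    intro v a ha b hb
    simpa [edist_add_left] using hL ha hb
  have hfae : ∀ v : EuclideanSpace ℝ (Fin n), AEMeasurable (fun t => v + γ t) (volume.restrict K) :=
    fun v => hγae.const_add v
  -- key measure inequality
  have hmeas_le : ∀ v : EuclideanSpace ℝ (Fin n),
      (μH[1]).restrict ((fun t => v + γ t) '' K) ≤
        Measure.map (fun t => v + γ t) ((L : ℝ≥0∞) • volume.restrict K) := by
    intro v
    rw [Measure.le_iff]
    intro s hs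
    rw [Measure.restrict_apply hs, Measure.map_apply_of_aemeasurable
      ((hfae v).smul_measure _) hs]
    calc μH[1] (s ∩ (fun t => v + γ t) '' K)
        ≤ μH[1] ((fun t => v + γ t) '' (K ∩ (fun t => v + γ t) ⁻¹' s)) := by
          apply measure_mono
          rintro x ⟨hxs, t, ht, rfl⟩
          exact ⟨t, ⟨ht, hxs⟩, rfl⟩
      _ ≤ (L : ℝ≥0∞) ^ (1 : ℝ) * μH[1] (K ∩ (fun t => v + γ t) ⁻¹' s) :=
          ((hfLip v).mono Set.inter_subset_left).hausdorffMeasure_image_le zero_le_one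
      _ = ((L : ℝ≥0∞) • volume.restrict K) ((fun t => v + γ t) ⁻¹' s) := by
          rw [MeasureTheory.hausdorffMeasure_real]
          rw [Measure.smul_apply, Measure.restrict_apply' hKm, Set.inter_comm]
          simp [ENNReal.rpow_one]
  -- bound the inner integral
  have hinner : ∀ v : EuclideanSpace ℝ (Fin n),
      (∫⁻ x in A, u v (x - v) ∂((μH[1]).restrict ((fun t => v + γ t) '' K))) ≤
        (L : ℝ≥0∞) * ∫⁻ t in K, A.indicator (fun x => u v (x - v)) (v + γ t) ∂volume := by
    intro v
    have hg : Measurable fun x : EuclideanSpace ℝ (Fin n) => u v (x - v) := by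
      have h : Measurable fun x : EuclideanSpace ℝ (Fin n) => (v, x - v) :=
        measurable_const.prodMk (measurable_id.sub_const v)
      exact hu.comp h
    calc (∫⁻ x in A, u v (x - v) ∂((μH[1]).restrict ((fun t => v + γ t) '' K)))
        ≤ ∫⁻ x in A, u v (x - v)
            ∂(Measure.map (fun t => v + γ t) ((L : ℝ≥0∞) • volume.restrict K)) :=
          lintegral_mono' (Measure.restrict_mono subset_rfl (hmeas_le v)) le_rfl
      _ = ∫⁻ x, A.indicator (fun x => u v (x - v)) x
            ∂(Measure.map (fun t => v + γ t) ((L : ℝ≥0∞) • volume.restrict K)) :=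
          (lintegral_indicator hA _).symm
      _ = ∫⁻ t, A.indicator (fun x => u v (x - v)) (v + γ t)
            ∂((L : ℝ≥0∞) • volume.restrict K) :=
          lintegral_map' (hg.indicator hA).aemeasurable ((hfae v).smul_measure _)
      _ = (L : ℝ≥0∞) * ∫⁻ t in K, A.indicator (fun x => u v (x - v)) (v + γ t) ∂volume := by
          rw [lintegral_smul_measure, smul_eq_mul]
  refine le_antisymm ?_ (zero_le)
  calc (∫⁻ v in Metric.closedBall (0 : EuclideanSpace ℝ (Fin n)) δ,
        (∫⁻ x in A, u v (x - v) ∂((μH[1]).restrict ((fun t => v + γ t) '' K))) ∂volume)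
      ≤ ∫⁻ v in Metric.closedBall (0 : EuclideanSpace ℝ (Fin n)) δ,
          (L : ℝ≥0∞) * ∫⁻ t in K, A.indicator (fun x => u v (x - v)) (v + γ t) ∂volume ∂volume :=
        lintegral_mono fun v => hinner v
    _ = (L : ℝ≥0∞) * ∫⁻ v in Metric.closedBall (0 : EuclideanSpace ℝ (Fin n)) δ,
          ∫⁻ t in K, A.indicator (fun x => u v (x - v)) (v + γ t) ∂volume ∂volume :=
        lintegral_const_mul' _ _ ENNReal.coe_ne_top
    _ = (L : ℝ≥0∞) * ∫⁻ t in K,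
          ∫⁻ v in Metric.closedBall (0 : EuclideanSpace ℝ (Fin n)) δ,
            A.indicator (fun x => u v (x - v)) (v + γ t) ∂volume ∂volume := by
        congr 1
        apply lintegral_lintegral_swap
        -- a.e. measurability on the product
        have h1 : AEMeasurable (fun p : EuclideanSpace ℝ (Fin n) × ℝ => γ p.2)
            ((volume.restrict (Metric.closedBall (0 : EuclideanSpace ℝ (Fin n)) δ)).prod (volume.restrict K)) :=
          hγae.comp_snd
        have h2 : AEMeasurable (fun p : EuclideanSpace ℝ (Fin n) × ℝ => p.1 + γ p.2)
            ((volume.restrict (Metric.closedBall (0 : EuclideanSpace ℝ (Fin n)) δ)).prod (volume.restrict K)) :=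
          measurable_fst.aemeasurable.add h1
        have h3 : AEMeasurable (fun p : EuclideanSpace ℝ (Fin n) × ℝ => u p.1 (p.1 + γ p.2 - p.1))
            ((volume.restrict (Metric.closedBall (0 : EuclideanSpace ℝ (Fin n)) δ)).prod (volume.restrict K)) :=
          hu.comp_aemeasurable (measurable_fst.aemeasurable.prodMk (h2.sub measurable_fst.aemeasurable))
        have : AEMeasurable
            (fun p : EuclideanSpace ℝ (Fin n) × ℝ => A.indicator (1 : EuclideanSpace ℝ (Fin n) → ℝ≥0∞) (p.1 + γ p.2)
              * u p.1 (p.1 + γ p.2 - p.1))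
            ((volume.restrict (Metric.closedBall (0 : EuclideanSpace ℝ (Fin n)) δ)).prod (volume.restrict K)) :=
          by
          have hind : Measurable (A.indicator (1 : EuclideanSpace ℝ (Fin n) → ℝ≥0∞)) :=
            measurable_one.indicator hA
          exact ((hind.comp_aemeasurable h2).mul h3)
        apply this.congr
        filter_upwards with p
        by_cases hp : p.1 + γ p.2 ∈ A <;>
          simp [Function.uncurry, Set.indicator_of_mem, Set.indicator_of_notMem, hp,
            add_sub_cancel_left]
    _ = (L : ℝ≥0∞) * ∫⁻ t in K, (0 : ℝ≥0∞) ∂volume := by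
        congr 1
        apply lintegral_congr fun t => ?_
        have hnull : volume ((fun v : EuclideanSpace ℝ (Fin n) => v + γ t) ⁻¹' A) = 0 := by
          rw [measure_preimage_add_right]
          exact hA0
        have : (fun v : EuclideanSpace ℝ (Fin n) => A.indicator (fun x => u v (x - v)) (v + γ t))
            =ᵐ[volume.restrict (Metric.closedBall (0 : EuclideanSpace ℝ (Fin n)) δ)] 0 := by
          apply ae_restrict_of_ae
          filter_upwards [measure_eq_zero_iff_ae_notMem.mp hnull] with v hv
          simp only [Set.mem_preimage] at hv
          simp [Set.indicator_of_notMem, hv]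
        rw [lintegral_congr_ae this]
        simp
    _ = 0 := by simp
end

section
/- Let n ≥ 2, let K ⊂ ℝ be a compact set, let γ : K → ℝ^n be a Lipschitz map, and let δ > 0. Then for every fixed w ∈ ℝ^n, for Lebesgue-almost every v in the closed Euclidean ball B(0,δ) ⊂ ℝ^n one has H^1( (v + γ(K)) ∩ (w + γ(K)) ) = 0. -/
open MeasureTheory
open scoped NNReal ENNReal

/-- Almost every translate of a Lipschitz curve meets any fixed translate in an `H¹`-null set:
for every `w` and Lebesgue-a.e. `v ∈ B(0,δ)`, `H¹((v + γ(K)) ∩ (w + γ(K))) = 0`. -/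
theorem stmt_7 {n : ℕ} (hn : 2 ≤ n) (K : Set ℝ) (hK : IsCompact K)
    (γ : ℝ → EuclideanSpace ℝ (Fin n)) (hγ : ∃ L : ℝ≥0, LipschitzOnWith L γ K)
    (δ : ℝ) (hδ : 0 < δ) (w : EuclideanSpace ℝ (Fin n)) :
    ∀ᵐ v ∂(volume.restrict (Metric.closedBall (0 : EuclideanSpace ℝ (Fin n)) δ)),
      μH[1] (((fun t => v + γ t) '' K) ∩ ((fun t => w + γ t) '' K)) = 0 := by
  classical
  obtain ⟨L, hL⟩ := hγ
  set A : Set (EuclideanSpace ℝ (Fin n)) := γ '' K with hAdef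
  have hAc : IsCompact A := hK.image_of_continuousOn hL.continuousOn
  -- `H¹(A) < ∞`
  have hA1 : μH[1] A < ⊤ := by
    calc μH[1] A ≤ (L : ℝ≥0∞) ^ (1 : ℝ) * μH[1] K :=
          hL.hausdorffMeasure_image_le zero_le_one
      _ < ⊤ := by
          rw [ENNReal.rpow_one, MeasureTheory.hausdorffMeasure_real]
          exact ENNReal.mul_lt_top ENNReal.coe_lt_top hK.measure_lt_top
  -- `Hⁿ(A) = 0`
  have hAn : μH[(n : ℝ)] A = 0 := by
    rcases MeasureTheory.Measure.hausdorffMeasure_zero_or_top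
        (show (1 : ℝ) < (n : ℝ) by exact_mod_cast hn.trans_lt' one_lt_two) A with h | h
    · exact h
    · exact absurd h hA1.ne
  -- `volume A = 0`, since `volume` and `μH[n]` are both Haar measures on `(EuclideanSpace ℝ (Fin n))`
  have hHaar : Measure.IsAddHaarMeasure (μH[(n : ℝ)] : Measure (EuclideanSpace ℝ (Fin n))) := by
    have hfr : (Module.finrank ℝ (EuclideanSpace ℝ (Fin n)) : ℝ) = (n : ℝ) := by
      simp [finrank_euclideanSpace_fin]
    rw [← hfr]
    infer_instance
  have hvolA : volume A = 0 := by
    have heq := Measure.isAddLeftInvariant_eq_smul (volume : Measure (EuclideanSpace ℝ (Fin n))) (μH[(n : ℝ)])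
    rw [heq]
    simp [hAn]
  -- the fixed translate
  set B : Set (EuclideanSpace ℝ (Fin n)) := (fun x => w + x) '' A with hBdef
  have hBc : IsCompact B := hAc.image (continuous_const.add continuous_id)
  have hBmeas : MeasurableSet B := hBc.measurableSet
  have hvolB : volume B = 0 := by
    have : B = (fun x => -w + x) ⁻¹' A := by
      ext x
      simp [hBdef, Set.mem_image, eq_comm, neg_add_eq_iff_eq_add]
    rw [this, measure_preimage_add]
    exact hvolA
  -- the finite measure `ν = H¹ restricted to A`
  set ν : Measure (EuclideanSpace ℝ (Fin n)) := μH[(1 : ℝ)].restrict A with hνdef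
  have hνfin : IsFiniteMeasure ν := by
    constructor
    rw [hνdef, Measure.restrict_apply_univ]
    exact hA1
  -- Fubini: for a.e. `v`, `ν ((v + ·) ⁻¹' B) = 0`
  have hFmeas : Measurable (Function.uncurry fun (v : (EuclideanSpace ℝ (Fin n))) (a : (EuclideanSpace ℝ (Fin n))) =>
      B.indicator (1 : (EuclideanSpace ℝ (Fin n)) → ℝ≥0∞) (v + a)) := by
    have : Function.uncurry (fun (v : (EuclideanSpace ℝ (Fin n))) (a : (EuclideanSpace ℝ (Fin n))) => B.indicator (1 : (EuclideanSpace ℝ (Fin n)) → ℝ≥0∞) (v + a))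
        = Set.indicator ((fun p : (EuclideanSpace ℝ (Fin n)) × (EuclideanSpace ℝ (Fin n)) => p.1 + p.2) ⁻¹' B) 1 := by
      ext p
      simp [Function.uncurry, Set.indicator_apply]
    rw [this]
    exact measurable_const.indicator ((measurable_fst.add measurable_snd) hBmeas)
  have hkey : ∀ᵐ v ∂(volume : Measure (EuclideanSpace ℝ (Fin n))), ν ((fun x => v + x) ⁻¹' B) = 0 := by
    have hrepr : ∀ v : (EuclideanSpace ℝ (Fin n)), ν ((fun x => v + x) ⁻¹' B) =
        ∫⁻ a, B.indicator (1 : (EuclideanSpace ℝ (Fin n)) → ℝ≥0∞) (v + a) ∂ν := by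
      intro v
      rw [← lintegral_indicator_one ((measurable_const_add v) hBmeas)]
      refine lintegral_congr fun a => ?_
      simp [Set.indicator_apply]
    have hint : ∫⁻ v, ν ((fun x => v + x) ⁻¹' B) ∂(volume : Measure (EuclideanSpace ℝ (Fin n))) = 0 := by
      simp_rw [hrepr]
      rw [lintegral_lintegral_swap hFmeas.aemeasurable]
      have : ∀ a : (EuclideanSpace ℝ (Fin n)), ∫⁻ v, B.indicator (1 : (EuclideanSpace ℝ (Fin n)) → ℝ≥0∞) (v + a) ∂(volume : Measure (EuclideanSpace ℝ (Fin n))) = 0 := by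
        intro a
        have : (fun v : (EuclideanSpace ℝ (Fin n)) => B.indicator (1 : (EuclideanSpace ℝ (Fin n)) → ℝ≥0∞) (v + a))
            = Set.indicator ((fun v : (EuclideanSpace ℝ (Fin n)) => v + a) ⁻¹' B) 1 := by
          ext v; simp [Set.indicator_apply]
        rw [this, lintegral_indicator_one ((measurable_add_const a) hBmeas),
          measure_preimage_add_right]
        exact hvolB
      simp_rw [this]
      simp
    have hmeas : Measurable fun v : (EuclideanSpace ℝ (Fin n)) =>
        ∫⁻ a, B.indicator (1 : (EuclideanSpace ℝ (Fin n)) → ℝ≥0∞) (v + a) ∂ν :=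
      Measurable.lintegral_prod_right hFmeas
    have := (lintegral_eq_zero_iff' (by simpa [hrepr] using hmeas.aemeasurable)).mp hint
    filter_upwards [this] with v hv using hv
  -- conclude
  refine ae_restrict_of_ae ?_
  filter_upwards [hkey] with v hv
  have him : (fun t => v + γ t) '' K = (fun x => v + x) '' A := by
    rw [hAdef, ← Set.image_comp]
    rfl
  have hwim : (fun t => w + γ t) '' K = B := by
    rw [hBdef, hAdef, ← Set.image_comp]
    rfl
  rw [him, hwim, ← Set.image_inter_preimage]
  have hiso : Isometry (fun x : (EuclideanSpace ℝ (Fin n)) => v + x) := Isometry.of_dist_eq (fun a b => by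
    simp [dist_add_left])
  rw [hiso.hausdorffMeasure_image (Or.inl zero_le_one)]
  have : μH[(1 : ℝ)] (A ∩ (fun x => v + x) ⁻¹' B) = ν ((fun x => v + x) ⁻¹' B) := by
    rw [hνdef, Measure.restrict_apply ((measurable_const_add v) hBmeas), Set.inter_comm]
  rw [this, hv]
end

section
/- Let μ be a Radon measure on ℝ^n and let ζ : ℝ^n → ℝ^n be a Borel map such that every Lipschitz function f : ℝ^n → ℝ is, for μ-almost every x, line differentiable at x along ζ(x). Let B ⊆ ℝ^n be a Borel set with μ(B) > 0. Then for μ-almost every x ∈ B one has lim_{t→0} dist(x + t·ζ(x), B)/|t| = 0, where dist(y,B) = inf{ |y − b| : b ∈ B } is the Euclidean distance from y to B. -/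
open MeasureTheory Filter
open scoped NNReal

/-- If every Lipschitz function is `μ`-a.e. line differentiable along the Borel vector field
`ζ`, then for every Borel set `B` of positive measure and `μ`-a.e. `x ∈ B`, the point
`x + t·ζ(x)` stays within `o(t)` of `B` as `t → 0`. -/
theorem stmt_8 {n : ℕ} (μ : Measure (EuclideanSpace ℝ (Fin n))) [IsFiniteMeasureOnCompacts μ]
    (ζ : EuclideanSpace ℝ (Fin n) → EuclideanSpace ℝ (Fin n)) (hζ : Measurable ζ)
    (hdiff : ∀ f : EuclideanSpace ℝ (Fin n) → ℝ, (∃ L : ℝ≥0, LipschitzWith L f) →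
      ∀ᵐ x ∂μ, LineDifferentiableAt ℝ f x (ζ x))
    (B : Set (EuclideanSpace ℝ (Fin n))) (hB : MeasurableSet B) (hμB : 0 < μ B) :
    ∀ᵐ x ∂μ.restrict B,
      Tendsto (fun t : ℝ => Metric.infDist (x + t • ζ x) B / |t|)
        (nhdsWithin 0 {(0:ℝ)}ᶜ) (nhds 0) := by
  have hlip : ∃ L : ℝ≥0, LipschitzWith L (fun y => Metric.infDist y B) :=
    ⟨1, Metric.lipschitz_infDist_pt B⟩
  have h1 : ∀ᵐ x ∂μ.restrict B,
      LineDifferentiableAt ℝ (fun y => Metric.infDist y B) x (ζ x) :=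
    ae_restrict_of_ae (hdiff _ hlip)
  have h2 : ∀ᵐ x ∂μ.restrict B, x ∈ B := ae_restrict_mem hB
  filter_upwards [h1, h2] with x hx hxB
  set g : ℝ → ℝ := fun t => Metric.infDist (x + t • ζ x) B with hg
  have hg0 : g 0 = 0 := by
    simp [hg, Metric.infDist_zero_of_mem hxB]
  have hgnn : ∀ t, 0 ≤ g t := fun t => Metric.infDist_nonneg
  have hder : HasDerivAt g (lineDeriv ℝ (fun y => Metric.infDist y B) x (ζ x)) 0 :=
    hx.hasLineDerivAt
  set d := lineDeriv ℝ (fun y => Metric.infDist y B) x (ζ x) with hd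
  have hslope : Tendsto (slope g 0) (nhdsWithin 0 {(0:ℝ)}ᶜ) (nhds d) :=
    hasDerivAt_iff_tendsto_slope.mp hder
  have hslope_eq : ∀ t : ℝ, slope g 0 t = g t / t := by
    intro t
    simp [slope, hg0, div_eq_inv_mul]
  -- d ≥ 0 from the right, d ≤ 0 from the left
  have hright : Tendsto (slope g 0) (nhdsWithin 0 (Set.Ioi 0)) (nhds d) :=
    hslope.mono_left (nhdsWithin_mono _ (fun t ht => ne_of_gt ht))
  have hleft : Tendsto (slope g 0) (nhdsWithin 0 (Set.Iio 0)) (nhds d) :=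
    hslope.mono_left (nhdsWithin_mono _ (fun t ht => ne_of_lt ht))
  have hd_nonneg : 0 ≤ d := by
    refine le_of_tendsto_of_tendsto tendsto_const_nhds hright ?_
    filter_upwards [self_mem_nhdsWithin] with t ht
    rw [hslope_eq]
    exact div_nonneg (hgnn t) (le_of_lt ht)
  have hd_nonpos : d ≤ 0 := by
    refine le_of_tendsto_of_tendsto hleft tendsto_const_nhds ?_
    filter_upwards [self_mem_nhdsWithin] with t ht
    rw [hslope_eq]
    exact div_nonpos_of_nonneg_of_nonpos (hgnn t) (le_of_lt ht)
  have hd0 : d = 0 := le_antisymm hd_nonpos hd_nonneg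
  have habs : Tendsto (fun t => |slope g 0 t|) (nhdsWithin 0 {(0:ℝ)}ᶜ) (nhds |d|) :=
    hslope.abs
  rw [hd0, abs_zero] at habs
  refine habs.congr fun t => ?_
  rw [hslope_eq, abs_div, abs_of_nonneg (hgnn t)]
end

section
/- Let μ be a Radon measure on ℝ^n and let ζ₁, ζ₂ : ℝ^n → ℝ^n be Borel maps such that every Lipschitz function f : ℝ^n → ℝ is, for μ-almost every x, line differentiable at x along ζ₁(x) and line differentiable at x along ζ₂(x). Then for every Lipschitz function f : ℝ^n → ℝ, for μ-almost every x, f is line differentiable at x along ζ₁(x) + ζ₂(x) and Df(x, ζ₁(x) + ζ₂(x)) = Df(x, ζ₁(x)) + Df(x, ζ₂(x)). -/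
open MeasureTheory Metric Filter
open scoped NNReal Topology ENNReal

private lemma hasDerivAt_iff_tendsto_quot {g : ℝ → ℝ} {l : ℝ} :
    HasDerivAt g l 0 ↔ Tendsto (fun t => (g t - g 0) / t) (𝓝[≠] (0:ℝ)) (𝓝 l) := by
  rw [hasDerivAt_iff_tendsto_slope]
  have h : slope g 0 = fun t => (g t - g 0) / t := by
    funext t; rw [slope_def_field, sub_zero]
  rw [h]

private lemma tendsto_quot_zero_of_nonneg {g : ℝ → ℝ} (hg : ∀ t, 0 ≤ g t) (h0 : g 0 = 0)
    (hd : DifferentiableAt ℝ g 0) :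
    Tendsto (fun t => g t / |t|) (𝓝[≠] (0:ℝ)) (𝓝 0) := by
  have hq : Tendsto (fun t => g t / t) (𝓝[≠] (0:ℝ)) (𝓝 (deriv g 0)) := by
    have h := hasDerivAt_iff_tendsto_quot.1 hd.hasDerivAt
    simpa [h0] using h
  have hpos : (0:ℝ) ≤ deriv g 0 := by
    have h1 : Tendsto (fun t => g t / t) (𝓝[>] (0:ℝ)) (𝓝 (deriv g 0)) :=
      hq.mono_left (nhdsWithin_mono _ (fun t ht => ne_of_gt ht))
    exact ge_of_tendsto h1 (eventually_nhdsWithin_of_forall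
      (fun t ht => div_nonneg (hg t) (le_of_lt ht)))
  have hneg : deriv g 0 ≤ 0 := by
    have h1 : Tendsto (fun t => g t / t) (𝓝[<] (0:ℝ)) (𝓝 (deriv g 0)) :=
      hq.mono_left (nhdsWithin_mono _ (fun t ht => ne_of_lt ht))
    exact le_of_tendsto h1 (eventually_nhdsWithin_of_forall
      (fun t ht => div_nonpos_of_nonneg_of_nonpos (hg t) (le_of_lt ht)))
  have hz : deriv g 0 = 0 := le_antisymm hneg hpos
  rw [hz] at hq
  have habs : Tendsto (fun t => |g t / t|) (𝓝[≠] (0:ℝ)) (𝓝 0) := by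
    simpa using hq.abs
  refine habs.congr (fun t => ?_)
  rw [abs_div, abs_of_nonneg (hg t)]

private lemma bound_of_rat {c : ℝ → ℝ} (hc : ∀ t : ℝ, t ≠ 0 → ContinuousAt c t) {δ B : ℝ}
    (h : ∀ s : ℚ, (s:ℝ) ≠ 0 → |(s:ℝ)| ≤ δ → c s ≤ B) :
    ∀ t : ℝ, t ≠ 0 → |t| ≤ δ → c t ≤ B := by
  intro t ht hδt
  have hsel : ∀ k : ℕ, ∃ s : ℚ, (s:ℝ) ≠ 0 ∧ |(s:ℝ)| ≤ |t| ∧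
      dist (s:ℝ) t ≤ |t| * (1/(k+1)) := by
    intro k
    have hk2 : (0:ℝ) < (k:ℝ) + 2 := by positivity
    have hk1 : (0:ℝ) < (k:ℝ) + 1 := by positivity
    rcases lt_or_gt_of_ne ht with hneg | hpos
    · -- t < 0 : pick s ∈ (t, t - t/(k+2))
      have hu : t < t - t/(k+2) := by
        have : t / (k+2) < 0 := div_neg_of_neg_of_pos hneg hk2
        linarith
      obtain ⟨s, hs1, hs2⟩ := exists_rat_btwn hu
      have h4 : t ≤ t / (k+2) := by
        rw [le_div_iff₀ hk2]; nlinarith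
      have hsneg : (s:ℝ) < 0 := by linarith
      have h6 : (-t)/(k+2) ≤ (-t)/(k+1) :=
        div_le_div_of_nonneg_left (by linarith) hk1 (by norm_num)
      refine ⟨s, ne_of_lt hsneg, ?_, ?_⟩
      · rw [abs_of_neg hsneg, abs_of_neg hneg]; linarith
      · rw [Real.dist_eq, abs_of_pos (by linarith : (0:ℝ) < (s:ℝ) - t), abs_of_neg hneg]
        have h5 : (s:ℝ) - t < (-t)/(k+2) := by
          have hnd : -(t/(k+2)) = (-t)/(k+2) := (neg_div _ _).symm
          linarith
        rw [mul_one_div]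
        linarith
    · -- 0 < t : pick s ∈ (t - t/(k+2), t)
      have hu : t - t/(k+2) < t := by
        have : 0 < t / (k+2) := div_pos hpos hk2
        linarith
      obtain ⟨s, hs1, hs2⟩ := exists_rat_btwn hu
      have h4 : t / (k+2) ≤ t := by
        rw [div_le_iff₀ hk2]; nlinarith
      have hspos : (0:ℝ) < s := by linarith
      have h6 : t/(k+2) ≤ t/(k+1) :=
        div_le_div_of_nonneg_left (le_of_lt hpos) hk1 (by norm_num)
      refine ⟨s, ne_of_gt hspos, ?_, ?_⟩
      · rw [abs_of_pos hspos, abs_of_pos hpos]; linarith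
      · rw [Real.dist_eq, abs_of_neg (by linarith : (s:ℝ) - t < 0), abs_of_pos hpos]
        rw [mul_one_div]
        linarith
  choose s hs0 hsle hsd using hsel
  have hstend : Tendsto (fun k : ℕ => (s k : ℝ)) atTop (𝓝 t) := by
    rw [tendsto_iff_dist_tendsto_zero]
    apply squeeze_zero (fun k => dist_nonneg) hsd
    simpa using tendsto_one_div_add_atTop_nhds_zero_nat.const_mul |t|
  have hcb : ∀ k, c (s k) ≤ B := fun k => h (s k) (hs0 k) (le_trans (hsle k) hδt)
  exact le_of_tendsto (((hc t ht).tendsto).comp hstend) (Eventually.of_forall hcb)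

private lemma key_est {n : ℕ} {f : EuclideanSpace ℝ (Fin n) → ℝ} {L : ℝ≥0}
    (hL : LipschitzWith L f)
    {ζ₁ ζ₂ : EuclideanSpace ℝ (Fin n) → EuclideanSpace ℝ (Fin n)}
    {G : EuclideanSpace ℝ (Fin n) → ℝ}
    {K : Set (EuclideanSpace ℝ (Fin n))} (hKc : IsCompact K)
    {x : EuclideanSpace ℝ (Fin n)} (hxK : x ∈ K) (j : ℕ) {δ : ℝ} (hδ : 0 < δ)
    (hunif : ∀ y ∈ K, ∀ t : ℝ, t ≠ 0 → |t| ≤ δ →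
      |(f (y + t • ζ₂ y) - f y) / t - G y| ≤ 1 / (j+1))
    (hval : ∀ y ∈ K, dist (ζ₂ y) (ζ₂ x) ≤ 1/(j+1) ∧ |G y - G x| ≤ 1/(j+1))
    (hdist : Tendsto (fun t => infDist (x + t • ζ₁ x) K / |t|) (𝓝[≠] (0:ℝ)) (𝓝 0)) :
    ∀ᶠ t in 𝓝[≠] (0:ℝ),
      |(f (x + t • ζ₁ x + t • ζ₂ x) - f (x + t • ζ₁ x)) / t - G x|
        ≤ (3*(L:ℝ)+2)/(j+1) := by
  have hj : (0:ℝ) < 1/((j:ℝ)+1) := by positivity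
  have ev1 : ∀ᶠ t in 𝓝[≠] (0:ℝ), |t| ≤ δ := by
    apply eventually_nhdsWithin_of_eventually_nhds
    have : ∀ᶠ t in 𝓝 (0:ℝ), |t - 0| < δ := eventually_abs_sub_lt 0 hδ
    filter_upwards [this] with t h; rw [sub_zero] at h; exact h.le
  have ev2 : ∀ᶠ t in 𝓝[≠] (0:ℝ),
      infDist (x + t • ζ₁ x) K / |t| < 1/((j:ℝ)+1) :=
    hdist.eventually_lt_const hj
  filter_upwards [ev1, ev2, self_mem_nhdsWithin] with t hδt hdt ht0
  have ht0' : t ≠ 0 := ht0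
  have htpos : (0:ℝ) < |t| := abs_pos.2 ht0'
  have hid : infDist (x + t • ζ₁ x) K ≤ 1/((j:ℝ)+1) * |t| := by
    rw [div_lt_iff₀ htpos] at hdt
    exact hdt.le
  obtain ⟨y, hyK, hy⟩ := hKc.exists_infDist_eq_dist ⟨x, hxK⟩ (x + t • ζ₁ x)
  set a := x + t • ζ₁ x with ha
  have hday : dist a y ≤ 1/((j:ℝ)+1) * |t| := by rw [← hy]; exact hid
  obtain ⟨hv1, hv2⟩ := hval y hyK
  -- bound pieces
  have hb1 : |f (a + t • ζ₂ x) - f (y + t • ζ₂ y)| ≤ (L:ℝ) * (2 * (1/((j:ℝ)+1) * |t|)) := by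
    have hd : dist (a + t • ζ₂ x) (y + t • ζ₂ y) ≤ dist a y + dist (t • ζ₂ x) (t • ζ₂ y) :=
      dist_add_add_le _ _ _ _
    have hsm : dist (t • ζ₂ x) (t • ζ₂ y) = |t| * dist (ζ₂ x) (ζ₂ y) := by
      rw [dist_smul₀, Real.norm_eq_abs]
    have hle : dist (a + t • ζ₂ x) (y + t • ζ₂ y) ≤ 2 * (1/((j:ℝ)+1) * |t|) := by
      rw [hsm] at hd
      have : |t| * dist (ζ₂ x) (ζ₂ y) ≤ |t| * (1/((j:ℝ)+1)) :=
        mul_le_mul_of_nonneg_left (by rw [dist_comm]; exact hv1) (abs_nonneg t)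
      nlinarith [dist_nonneg (x := a) (y := y)]
    calc |f (a + t • ζ₂ x) - f (y + t • ζ₂ y)|
        = dist (f (a + t • ζ₂ x)) (f (y + t • ζ₂ y)) := (Real.dist_eq _ _).symm
      _ ≤ (L:ℝ) * dist (a + t • ζ₂ x) (y + t • ζ₂ y) := hL.dist_le_mul _ _
      _ ≤ (L:ℝ) * (2 * (1/((j:ℝ)+1) * |t|)) :=
          mul_le_mul_of_nonneg_left hle L.coe_nonneg
  have hb2 : |f y - f a| ≤ (L:ℝ) * (1/((j:ℝ)+1) * |t|) := by
    calc |f y - f a| = dist (f y) (f a) := (Real.dist_eq _ _).symm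
      _ ≤ (L:ℝ) * dist y a := hL.dist_le_mul _ _
      _ ≤ (L:ℝ) * (1/((j:ℝ)+1) * |t|) := by
          apply mul_le_mul_of_nonneg_left _ L.coe_nonneg
          rw [dist_comm]; exact hday
  have hq := hunif y hyK t ht0' hδt
  set A1 := f (a + t • ζ₂ x) - f (y + t • ζ₂ y) with hA1def
  set A2 := f y - f a with hA2def
  have hiden : (f (a + t • ζ₂ x) - f a) / t - G x
      = A1/t + A2/t + ((f (y + t • ζ₂ y) - f y)/t - G y) + (G y - G x) := by
    rw [hA1def, hA2def]
    field_simp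
    ring
  have habs : |(f (a + t • ζ₂ x) - f a) / t - G x|
      ≤ |A1/t| + |A2/t| + |(f (y + t • ζ₂ y) - f y)/t - G y| + |G y - G x| := by
    rw [hiden]
    calc |A1/t + A2/t + ((f (y + t • ζ₂ y) - f y)/t - G y) + (G y - G x)|
        ≤ |A1/t + A2/t + ((f (y + t • ζ₂ y) - f y)/t - G y)| + |G y - G x| := abs_add_le _ _
      _ ≤ (|A1/t + A2/t| + |(f (y + t • ζ₂ y) - f y)/t - G y|) + |G y - G x| := by
          have := abs_add_le (A1/t + A2/t) ((f (y + t • ζ₂ y) - f y)/t - G y)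
          linarith
      _ ≤ |A1/t| + |A2/t| + |(f (y + t • ζ₂ y) - f y)/t - G y| + |G y - G x| := by
          have := abs_add_le (A1/t) (A2/t)
          linarith
  have hA1b : |A1/t| ≤ 2*(L:ℝ)/((j:ℝ)+1) := by
    rw [abs_div, div_le_iff₀ htpos]
    calc |A1| ≤ (L:ℝ) * (2 * (1/((j:ℝ)+1) * |t|)) := hb1
      _ = 2*(L:ℝ)/((j:ℝ)+1) * |t| := by field_simp
  have hA2b : |A2/t| ≤ (L:ℝ)/((j:ℝ)+1) := by
    rw [abs_div, div_le_iff₀ htpos]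
    calc |A2| ≤ (L:ℝ) * (1/((j:ℝ)+1) * |t|) := hb2
      _ = (L:ℝ)/((j:ℝ)+1) * |t| := by field_simp
  have hsum : 2*(L:ℝ)/((j:ℝ)+1) + (L:ℝ)/((j:ℝ)+1) + 1/((j:ℝ)+1) + 1/((j:ℝ)+1)
      = (3*(L:ℝ)+2)/((j:ℝ)+1) := by
    field_simp
    ring
  linarith [habs, hA1b, hA2b, hq, hv2]

private lemma egorov_step {n : ℕ} {μ : Measure (EuclideanSpace ℝ (Fin n))}
    {f : EuclideanSpace ℝ (Fin n) → ℝ} (hfc : Continuous f)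
    {ζ₂ : EuclideanSpace ℝ (Fin n) → EuclideanSpace ℝ (Fin n)} (hζ₂ : Measurable ζ₂)
    {G : EuclideanSpace ℝ (Fin n) → ℝ} (hG : Measurable G)
    (hconv : ∀ᵐ x ∂μ, Tendsto (fun t => (f (x + t • ζ₂ x) - f x) / t)
      (𝓝[≠] (0:ℝ)) (𝓝 (G x)))
    {A : Set (EuclideanSpace ℝ (Fin n))} (hA : MeasurableSet A) (hAfin : μ A ≠ ∞)
    (j : ℕ) {ε : ℝ≥0∞} (hε : ε ≠ 0) :
    ∃ S, S ⊆ A ∧ MeasurableSet S ∧ μ (A \ S) ≤ ε ∧ ∃ m : ℕ,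
      ∀ y ∈ S, ∀ t : ℝ, t ≠ 0 → |t| ≤ 1/((m:ℝ)+1) →
        |(f (y + t • ζ₂ y) - f y) / t - G y| ≤ 1/((j:ℝ)+1) := by
  classical
  have hj : (0:ℝ) < 1/((j:ℝ)+1) := by positivity
  have hqm : ∀ s : ℝ, Measurable (fun x => |(f (x + s • ζ₂ x) - f x) / s - G x|) := by
    intro s
    have h1 : Measurable fun x : EuclideanSpace ℝ (Fin n) => x + s • ζ₂ x :=
      measurable_id.add (hζ₂.const_smul s)
    exact ((((hfc.measurable.comp h1).sub hfc.measurable).div_const s).sub hG).abs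
  set Bad : ℕ → Set (EuclideanSpace ℝ (Fin n)) := fun m =>
    A ∩ {x | ∃ s : ℚ, (s:ℝ) ≠ 0 ∧ |(s:ℝ)| ≤ 1/((m:ℝ)+1) ∧
      1/((j:ℝ)+1) < |(f (x + (s:ℝ) • ζ₂ x) - f x) / (s:ℝ) - G x|} with hBaddef
  have hBadm : ∀ m, MeasurableSet (Bad m) := by
    intro m
    apply hA.inter
    have hrw : {x : EuclideanSpace ℝ (Fin n) | ∃ s : ℚ, (s:ℝ) ≠ 0 ∧ |(s:ℝ)| ≤ 1/((m:ℝ)+1) ∧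
        1/((j:ℝ)+1) < |(f (x + (s:ℝ) • ζ₂ x) - f x) / (s:ℝ) - G x|}
        = ⋃ s : ℚ, {x | (s:ℝ) ≠ 0 ∧ |(s:ℝ)| ≤ 1/((m:ℝ)+1) ∧
          1/((j:ℝ)+1) < |(f (x + (s:ℝ) • ζ₂ x) - f x) / (s:ℝ) - G x|} := by
      ext x; simp [Set.mem_iUnion]
    rw [hrw]
    apply MeasurableSet.iUnion
    intro s
    by_cases hs : (s:ℝ) ≠ 0 ∧ |(s:ℝ)| ≤ 1/((m:ℝ)+1)
    · have : {x : EuclideanSpace ℝ (Fin n) | (s:ℝ) ≠ 0 ∧ |(s:ℝ)| ≤ 1/((m:ℝ)+1) ∧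
          1/((j:ℝ)+1) < |(f (x + (s:ℝ) • ζ₂ x) - f x) / (s:ℝ) - G x|}
          = {x | 1/((j:ℝ)+1) < |(f (x + (s:ℝ) • ζ₂ x) - f x) / (s:ℝ) - G x|} := by
        ext x
        constructor
        · rintro ⟨-, -, h⟩; exact h
        · intro h; exact ⟨hs.1, hs.2, h⟩
      rw [this]
      exact measurableSet_lt measurable_const (hqm s)
    · have : {x : EuclideanSpace ℝ (Fin n) | (s:ℝ) ≠ 0 ∧ |(s:ℝ)| ≤ 1/((m:ℝ)+1) ∧
          1/((j:ℝ)+1) < |(f (x + (s:ℝ) • ζ₂ x) - f x) / (s:ℝ) - G x|} = ∅ := by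
        ext x; simp only [Set.mem_setOf_eq, Set.mem_empty_iff_false, iff_false]
        tauto
      rw [this]
      exact MeasurableSet.empty
  have hAnti : Antitone Bad := by
    intro m m' hmm'
    apply Set.inter_subset_inter_right
    intro x hx
    obtain ⟨s, hs1, hs2, hs3⟩ := hx
    refine ⟨s, hs1, le_trans hs2 ?_, hs3⟩
    apply one_div_le_one_div_of_le (by positivity)
    have := (Nat.cast_le (α := ℝ)).2 hmm'; linarith
  have hIzero : μ (⋂ m, Bad m) = 0 := by
    apply measure_mono_null _ (ae_iff.1 hconv)
    intro x hx
    simp only [Set.mem_setOf_eq]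
    intro htend
    have hev : ∀ᶠ t in 𝓝[≠] (0:ℝ),
        |(f (x + t • ζ₂ x) - f x) / t - G x| < 1/((j:ℝ)+1) := by
      have h2 := Metric.tendsto_nhds.mp htend (1/((j:ℝ)+1)) hj
      filter_upwards [h2] with t h3
      rwa [Real.dist_eq] at h3
    rw [eventually_nhdsWithin_iff, Metric.eventually_nhds_iff] at hev
    obtain ⟨δ, hδ, hδev⟩ := hev
    obtain ⟨m, hm⟩ := exists_nat_one_div_lt hδ
    have hxm := Set.mem_iInter.1 hx m
    obtain ⟨-, s, hs1, hs2, hs3⟩ := hxm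
    have hsδ : dist (s:ℝ) 0 < δ := by
      rw [Real.dist_eq, sub_zero]
      exact lt_of_le_of_lt hs2 hm
    have := hδev hsδ (by simpa using hs1)
    linarith
  have hfin0 : μ (Bad 0) ≠ ∞ :=
    ne_of_lt (lt_of_le_of_lt (measure_mono Set.inter_subset_left) hAfin.lt_top)
  have htm := tendsto_measure_iInter_atTop
    (fun m => (hBadm m).nullMeasurableSet) hAnti ⟨0, hfin0⟩
  rw [hIzero] at htm
  have hevm : ∀ᶠ m in atTop, μ (Bad m) < ε :=
    htm.eventually_lt_const (by exact hε.bot_lt)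
  obtain ⟨m, hm⟩ := hevm.exists
  refine ⟨A \ Bad m, Set.diff_subset, hA.diff (hBadm m), ?_, m, ?_⟩
  · apply le_of_lt (lt_of_le_of_lt _ hm)
    apply measure_mono
    intro x hx
    obtain ⟨hxA, hxn⟩ := hx
    simp only [Set.mem_diff] at hxn
    push_neg at hxn
    exact hxn hxA
  · intro y hy
    have hyA : y ∈ A := hy.1
    have hyn : y ∉ Bad m := hy.2
    have hrat : ∀ s : ℚ, (s:ℝ) ≠ 0 → |(s:ℝ)| ≤ 1/((m:ℝ)+1) →
        |(f (y + (s:ℝ) • ζ₂ y) - f y) / (s:ℝ) - G y| ≤ 1/((j:ℝ)+1) := by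
      intro s hs1 hs2
      by_contra hcon
      push_neg at hcon
      exact hyn ⟨hyA, s, hs1, hs2, hcon⟩
    have hcont : ∀ t : ℝ, t ≠ 0 →
        ContinuousAt (fun t => |(f (y + t • ζ₂ y) - f y) / t - G y|) t := by
      intro t ht
      have h1 : Continuous fun t : ℝ => y + t • ζ₂ y :=
        continuous_const.add (continuous_id.smul continuous_const)
      exact ((((hfc.comp h1).continuousAt.sub continuousAt_const).div
        continuousAt_id ht).sub continuousAt_const).abs
    exact bound_of_rat hcont hrat

private lemma bracket_tendsto {n : ℕ} {μ : Measure (EuclideanSpace ℝ (Fin n))}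
    [IsFiniteMeasureOnCompacts μ]
    {f : EuclideanSpace ℝ (Fin n) → ℝ} {L : ℝ≥0} (hL : LipschitzWith L f)
    {ζ₁ ζ₂ : EuclideanSpace ℝ (Fin n) → EuclideanSpace ℝ (Fin n)}
    (hζ₂ : Measurable ζ₂)
    {G : EuclideanSpace ℝ (Fin n) → ℝ} (hGmeas : Measurable G)
    (hdiff₁ : ∀ g : EuclideanSpace ℝ (Fin n) → ℝ, (∃ L' : ℝ≥0, LipschitzWith L' g) →
      ∀ᵐ x ∂μ, LineDifferentiableAt ℝ g x (ζ₁ x))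
    (hconv : ∀ᵐ x ∂μ, Tendsto (fun t => (f (x + t • ζ₂ x) - f x) / t)
      (𝓝[≠] (0:ℝ)) (𝓝 (G x))) :
    ∀ᵐ x ∂μ, Tendsto (fun t => (f (x + t • ζ₁ x + t • ζ₂ x) - f (x + t • ζ₁ x)) / t)
      (𝓝[≠] (0:ℝ)) (𝓝 (G x)) := by
  classical
  rw [ae_iff]
  set BadSet := {x : EuclideanSpace ℝ (Fin n) |
    ¬ Tendsto (fun t => (f (x + t • ζ₁ x + t • ζ₂ x) - f (x + t • ζ₁ x)) / t)
      (𝓝[≠] (0:ℝ)) (𝓝 (G x))} with hBadSetdef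
  have hcover : BadSet ⊆ ⋃ R : ℕ, (BadSet ∩ closedBall 0 R) := by
    intro x hx
    obtain ⟨R, hR⟩ := exists_nat_ge ‖x‖
    exact Set.mem_iUnion.2 ⟨R, hx, by rwa [mem_closedBall_zero_iff]⟩
  refine measure_mono_null hcover (measure_iUnion_null fun R => ?_)
  -- reduce to: ∀ ε ≠ 0, μ (BadSet ∩ closedBall 0 R) ≤ ε
  suffices hsuff : ∀ ε : ℝ≥0∞, ε ≠ 0 → μ (BadSet ∩ closedBall 0 R) ≤ ε by
    by_contra hne
    have hfin : μ (BadSet ∩ closedBall 0 R) ≠ ∞ :=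
      ne_of_lt (lt_of_le_of_lt (measure_mono Set.inter_subset_right)
        (measure_closedBall_lt_top))
    have hhalf := hsuff (μ (BadSet ∩ closedBall 0 R) / 2)
      (by simp [ENNReal.div_eq_zero_iff, hne, hfin])
    exact absurd hhalf (not_le.2 (ENNReal.half_lt_self hne hfin))
  intro ε hε
  have hfc : Continuous f := hL.continuous
  set B : Set (EuclideanSpace ℝ (Fin n)) := closedBall 0 R with hBdef
  have hBfin : μ B ≠ ∞ := ne_of_lt measure_closedBall_lt_top
  set u : ℕ → (EuclideanSpace ℝ (Fin n)) × ℝ := TopologicalSpace.denseSeq _ with hudef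
  set P : ℕ → ℕ → Set (EuclideanSpace ℝ (Fin n)) := fun j k =>
    (fun x => (ζ₂ x, G x)) ⁻¹' closedBall (u k) (1/(2*((j:ℝ)+1))) with hPdef
  have hPmeas : ∀ j k, MeasurableSet (P j k) :=
    fun j k => (hζ₂.prodMk hGmeas) measurableSet_closedBall
  set A : ℕ → ℕ → Set (EuclideanSpace ℝ (Fin n)) := fun j k => P j k ∩ B with hAdef
  have hAmeas : ∀ j k, MeasurableSet (A j k) :=
    fun j k => (hPmeas j k).inter measurableSet_closedBall
  have hAfin : ∀ j k, μ (A j k) ≠ ∞ :=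
    fun j k => ne_of_lt (lt_of_le_of_lt (measure_mono Set.inter_subset_right)
      hBfin.lt_top)
  set εg : ℕ → ℕ → ℝ≥0∞ := fun j k => ε * (2:ℝ≥0∞)⁻¹^(j+1) * (2:ℝ≥0∞)⁻¹^(k+1) with hεgdef
  have hεgne : ∀ j k, εg j k ≠ 0 := by
    intro j k
    apply mul_ne_zero (mul_ne_zero hε _) _
    all_goals exact pow_ne_zero _ (ENNReal.inv_ne_zero.2 ENNReal.ofNat_ne_top)
  have hKEX : ∀ j k : ℕ, ∃ (K : Set (EuclideanSpace ℝ (Fin n))) (m : ℕ),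
      IsCompact K ∧ K ⊆ A j k ∧ μ (A j k \ K) ≤ εg j k ∧
      ∀ y ∈ K, ∀ t : ℝ, t ≠ 0 → |t| ≤ 1/((m:ℝ)+1) →
        |(f (y + t • ζ₂ y) - f y) / t - G y| ≤ 1/((j:ℝ)+1) := by
    intro j k
    obtain ⟨S, hSA, hSmeas, hSloss, m, hSunif⟩ :=
      egorov_step hfc hζ₂ hGmeas hconv (hAmeas j k) (hAfin j k) j
        (ε := εg j k / 2) (by simp [ENNReal.div_eq_zero_iff, hεgne j k])
    have hSfin : μ S ≠ ∞ :=
      ne_of_lt (lt_of_le_of_lt (measure_mono hSA) (hAfin j k).lt_top)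
    obtain ⟨K, hKS, hKclosed, hKloss⟩ := hSmeas.exists_isClosed_diff_lt hSfin
      (ε := εg j k / 2) (by simp [ENNReal.div_eq_zero_iff, hεgne j k])
    have hKcomp : IsCompact K := by
      apply Metric.isCompact_of_isClosed_isBounded hKclosed
      exact (Metric.isBounded_closedBall).subset
        (fun y hy => (hSA (hKS hy)).2)
    refine ⟨K, m, hKcomp, fun y hy => hSA (hKS hy), ?_, fun y hy => hSunif y (hKS hy)⟩
    calc μ (A j k \ K) ≤ μ ((A j k \ S) ∪ (S \ K)) := by
          apply measure_mono
          intro z hz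
          by_cases hzS : z ∈ S
          · exact Or.inr ⟨hzS, hz.2⟩
          · exact Or.inl ⟨hz.1, hzS⟩
      _ ≤ μ (A j k \ S) + μ (S \ K) := measure_union_le _ _
      _ ≤ εg j k / 2 + εg j k / 2 := add_le_add hSloss hKloss.le
      _ = εg j k := ENNReal.add_halves _
  choose K m hKcomp hKsub hKloss hKunif using hKEX
  -- a.e. line differentiability of distance functions along ζ₁
  have hdistae : ∀ᵐ x ∂μ, ∀ j k : ℕ,
      LineDifferentiableAt ℝ (fun y => infDist y (K j k)) x (ζ₁ x) := by
    rw [ae_all_iff]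
    intro j
    rw [ae_all_iff]
    intro k
    exact hdiff₁ _ ⟨1, lipschitz_infDist_pt (K j k)⟩
  -- pointwise claim
  have hclaim : ∀ x, (∀ j k : ℕ,
      LineDifferentiableAt ℝ (fun y => infDist y (K j k)) x (ζ₁ x)) →
      (∀ j : ℕ, ∃ k, x ∈ K j k) →
      Tendsto (fun t => (f (x + t • ζ₁ x + t • ζ₂ x) - f (x + t • ζ₁ x)) / t)
        (𝓝[≠] (0:ℝ)) (𝓝 (G x)) := by
    intro x hLD hcov
    rw [Metric.tendsto_nhds]
    intro ε' hε'
    obtain ⟨j, hj⟩ := exists_nat_gt ((3*(L:ℝ)+2)/ε')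
    have hjlt : (3*(L:ℝ)+2)/((j:ℝ)+1) < ε' := by
      rw [div_lt_iff₀ (by positivity)]
      rw [div_lt_iff₀ hε'] at hj
      nlinarith [hε'.le]
    obtain ⟨k, hxK⟩ := hcov j
    have hxA := hKsub j k hxK
    have hPx : dist (ζ₂ x, G x) (u k) ≤ 1/(2*((j:ℝ)+1)) := hxA.1
    have hval : ∀ y ∈ K j k, dist (ζ₂ y) (ζ₂ x) ≤ 1/((j:ℝ)+1) ∧
        |G y - G x| ≤ 1/((j:ℝ)+1) := by
      intro y hy
      have hPy : dist (ζ₂ y, G y) (u k) ≤ 1/(2*((j:ℝ)+1)) := (hKsub j k hy).1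
      have hpair : dist ((ζ₂ y, G y)) ((ζ₂ x, G x)) ≤ 1/((j:ℝ)+1) := by
        calc dist ((ζ₂ y, G y)) ((ζ₂ x, G x))
            ≤ dist ((ζ₂ y, G y)) (u k) + dist (u k) ((ζ₂ x, G x)) := dist_triangle _ _ _
          _ ≤ 1/(2*((j:ℝ)+1)) + 1/(2*((j:ℝ)+1)) := by
              refine add_le_add hPy ?_
              rw [dist_comm]
              exact hPx
          _ = 1/((j:ℝ)+1) := by
              rw [← add_div]
              rw [show (1:ℝ)+1 = 2 by norm_num]
              rw [div_eq_div_iff (by positivity) (by positivity)]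
              ring
      constructor
      · calc dist (ζ₂ y) (ζ₂ x) ≤ dist ((ζ₂ y, G y)) ((ζ₂ x, G x)) := by
              rw [Prod.dist_eq]
              exact le_max_left _ _
          _ ≤ 1/((j:ℝ)+1) := hpair
      · calc |G y - G x| = dist (G y) (G x) := (Real.dist_eq _ _).symm
          _ ≤ dist ((ζ₂ y, G y)) ((ζ₂ x, G x)) := by
              rw [Prod.dist_eq]
              exact le_max_right _ _
          _ ≤ 1/((j:ℝ)+1) := hpair
    have hgd : DifferentiableAt ℝ (fun t : ℝ => infDist (x + t • ζ₁ x) (K j k)) 0 :=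
      hLD j k
    have hdist : Tendsto (fun t => infDist (x + t • ζ₁ x) (K j k) / |t|)
        (𝓝[≠] (0:ℝ)) (𝓝 0) := by
      apply tendsto_quot_zero_of_nonneg (fun t => infDist_nonneg) _ hgd
      simp only [zero_smul, add_zero]
      exact infDist_zero_of_mem hxK
    have hev := key_est hL (hKcomp j k) hxK j
      (δ := 1/((m j k : ℝ)+1)) (by positivity) (hKunif j k) hval hdist
    filter_upwards [hev] with t ht
    rw [Real.dist_eq]
    exact lt_of_le_of_lt ht hjlt
  -- covering of B by the pieces
  have hBcov : ∀ j : ℕ, B ⊆ ⋃ k : ℕ, A j k := by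
    intro j x hxB
    obtain ⟨k, hk⟩ := (TopologicalSpace.denseRange_denseSeq
      ((EuclideanSpace ℝ (Fin n)) × ℝ)).exists_dist_lt ((ζ₂ x, G x))
      (show (0:ℝ) < 1/(2*((j:ℝ)+1)) by positivity)
    exact Set.mem_iUnion.2 ⟨k, hk.le, hxB⟩
  -- the inclusion
  have hincl : BadSet ∩ B ⊆
      {x | ¬ (∀ j k : ℕ, LineDifferentiableAt ℝ (fun y => infDist y (K j k)) x (ζ₁ x))}
      ∪ ⋃ j : ℕ, (B \ ⋃ k : ℕ, K j k) := by
    rintro x ⟨hxbad, hxB⟩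
    by_cases hLD : ∀ j k : ℕ, LineDifferentiableAt ℝ (fun y => infDist y (K j k)) x (ζ₁ x)
    · right
      by_cases hcov : ∀ j : ℕ, ∃ k, x ∈ K j k
      · exact absurd (hclaim x hLD hcov) hxbad
      · push_neg at hcov
        obtain ⟨j, hj⟩ := hcov
        refine Set.mem_iUnion.2 ⟨j, hxB, ?_⟩
        simp only [Set.mem_iUnion, not_exists]
        exact hj
    · left
      exact hLD
  -- geometric sums
  have hgeo : ∑' k : ℕ, ((2:ℝ≥0∞)⁻¹)^(k+1) = 1 := by
    rw [ENNReal.tsum_geometric_add_one, ENNReal.one_sub_inv_two, inv_inv]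
    exact ENNReal.inv_mul_cancel two_ne_zero ENNReal.ofNat_ne_top
  have hperj : ∀ j : ℕ, μ (B \ ⋃ k : ℕ, K j k) ≤ ε * (2:ℝ≥0∞)⁻¹^(j+1) := by
    intro j
    have hsub : B \ ⋃ k : ℕ, K j k ⊆ ⋃ k : ℕ, (A j k \ K j k) := by
      rintro x ⟨hxB, hxn⟩
      obtain ⟨k, hk⟩ := Set.mem_iUnion.1 (hBcov j hxB)
      refine Set.mem_iUnion.2 ⟨k, hk, fun hxK => hxn (Set.mem_iUnion.2 ⟨k, hxK⟩)⟩
    calc μ (B \ ⋃ k : ℕ, K j k) ≤ μ (⋃ k : ℕ, (A j k \ K j k)) := measure_mono hsub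
      _ ≤ ∑' k : ℕ, μ (A j k \ K j k) := measure_iUnion_le _
      _ ≤ ∑' k : ℕ, εg j k := ENNReal.tsum_le_tsum (fun k => hKloss j k)
      _ = (ε * (2:ℝ≥0∞)⁻¹^(j+1)) * ∑' k : ℕ, ((2:ℝ≥0∞)⁻¹)^(k+1) := by
          rw [← ENNReal.tsum_mul_left]
      _ = ε * (2:ℝ≥0∞)⁻¹^(j+1) := by rw [hgeo, mul_one]
  calc μ (BadSet ∩ B)
      ≤ μ ({x | ¬ (∀ j k : ℕ, LineDifferentiableAt ℝ
            (fun y => infDist y (K j k)) x (ζ₁ x))}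
          ∪ ⋃ j : ℕ, (B \ ⋃ k : ℕ, K j k)) := measure_mono hincl
    _ ≤ μ {x | ¬ (∀ j k : ℕ, LineDifferentiableAt ℝ
            (fun y => infDist y (K j k)) x (ζ₁ x))}
          + μ (⋃ j : ℕ, (B \ ⋃ k : ℕ, K j k)) := measure_union_le _ _
    _ = μ (⋃ j : ℕ, (B \ ⋃ k : ℕ, K j k)) := by
          rw [ae_iff.1 hdistae, zero_add]
    _ ≤ ∑' j : ℕ, μ (B \ ⋃ k : ℕ, K j k) := measure_iUnion_le _
    _ ≤ ∑' j : ℕ, ε * ((2:ℝ≥0∞)⁻¹)^(j+1) := ENNReal.tsum_le_tsum hperj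
    _ = ε * ∑' j : ℕ, ((2:ℝ≥0∞)⁻¹)^(j+1) := ENNReal.tsum_mul_left
    _ = ε := by rw [hgeo, mul_one]

/-- Composition of derivatives: if every Lipschitz function is `μ`-a.e. line differentiable
along the Borel vector fields `ζ₁` and `ζ₂`, then every Lipschitz function is `μ`-a.e. line
differentiable along `ζ₁ + ζ₂`, with `Df(x, ζ₁(x)+ζ₂(x)) = Df(x,ζ₁(x)) + Df(x,ζ₂(x))`. -/
theorem stmt_10 {n : ℕ} (μ : Measure (EuclideanSpace ℝ (Fin n))) [IsFiniteMeasureOnCompacts μ]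
    (ζ₁ ζ₂ : EuclideanSpace ℝ (Fin n) → EuclideanSpace ℝ (Fin n))
    (hζ₁ : Measurable ζ₁) (hζ₂ : Measurable ζ₂)
    (hdiff₁ : ∀ f : EuclideanSpace ℝ (Fin n) → ℝ, (∃ L : ℝ≥0, LipschitzWith L f) →
      ∀ᵐ x ∂μ, LineDifferentiableAt ℝ f x (ζ₁ x))
    (hdiff₂ : ∀ f : EuclideanSpace ℝ (Fin n) → ℝ, (∃ L : ℝ≥0, LipschitzWith L f) →
      ∀ᵐ x ∂μ, LineDifferentiableAt ℝ f x (ζ₂ x)) :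
    ∀ f : EuclideanSpace ℝ (Fin n) → ℝ, (∃ L : ℝ≥0, LipschitzWith L f) →
      ∀ᵐ x ∂μ, LineDifferentiableAt ℝ f x (ζ₁ x + ζ₂ x) ∧
        lineDeriv ℝ f x (ζ₁ x + ζ₂ x) = lineDeriv ℝ f x (ζ₁ x) + lineDeriv ℝ f x (ζ₂ x) := by
  intro f hfL
  obtain ⟨L, hL⟩ := hfL
  have hfc : Continuous f := hL.continuous
  -- pointwise: line differentiability along ζ₂ gives convergence of difference quotients
  have hquot : ∀ ζ : EuclideanSpace ℝ (Fin n) → EuclideanSpace ℝ (Fin n),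
      ∀ x, LineDifferentiableAt ℝ f x (ζ x) →
      Tendsto (fun t => (f (x + t • ζ x) - f x) / t) (𝓝[≠] (0:ℝ))
        (𝓝 (lineDeriv ℝ f x (ζ x))) := by
    intro ζ x hx
    have hx' : DifferentiableAt ℝ (fun t : ℝ => f (x + t • ζ x)) 0 := hx
    have hd : HasDerivAt (fun t : ℝ => f (x + t • ζ x)) (lineDeriv ℝ f x (ζ x)) 0 := by
      have h := hx'.hasDerivAt
      have heq : lineDeriv ℝ f x (ζ x) = deriv (fun t : ℝ => f (x + t • ζ x)) 0 := rfl
      rw [heq]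
      exact h
    have h2 := hasDerivAt_iff_tendsto_quot.1 hd
    simpa only [zero_smul, add_zero] using h2
  have htk : Tendsto (fun k : ℕ => 1/((k:ℝ)+1)) atTop (𝓝[≠] (0:ℝ)) := by
    rw [tendsto_nhdsWithin_iff]
    constructor
    · exact tendsto_one_div_add_atTop_nhds_zero_nat
    · apply Eventually.of_forall
      intro k
      simp only [Set.mem_compl_iff, Set.mem_singleton_iff]
      positivity
  have hae₂ := hdiff₂ f ⟨L, hL⟩
  have hqmeas : ∀ k : ℕ, AEMeasurable
      (fun x => (f (x + (1/((k:ℝ)+1)) • ζ₂ x) - f x) / (1/((k:ℝ)+1))) μ := by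
    intro k
    apply Measurable.aemeasurable
    have h1 : Measurable fun x : EuclideanSpace ℝ (Fin n) => x + (1/((k:ℝ)+1)) • ζ₂ x :=
      measurable_id.add (hζ₂.const_smul (1/((k:ℝ)+1)))
    exact ((hfc.measurable.comp h1).sub hfc.measurable).div_const _
  have hlim : ∀ᵐ x ∂μ, ∃ l, Tendsto
      (fun k : ℕ => (f (x + (1/((k:ℝ)+1)) • ζ₂ x) - f x) / (1/((k:ℝ)+1))) atTop (𝓝 l) := by
    filter_upwards [hae₂] with x hx
    exact ⟨_, (hquot ζ₂ x hx).comp htk⟩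
  obtain ⟨G, hGmeas, hGtend⟩ := measurable_limit_of_tendsto_metrizable_ae hqmeas hlim
  have hGeq : ∀ᵐ x ∂μ, G x = lineDeriv ℝ f x (ζ₂ x) := by
    filter_upwards [hae₂, hGtend] with x hx hgx
    exact tendsto_nhds_unique hgx ((hquot ζ₂ x hx).comp htk)
  have hconv : ∀ᵐ x ∂μ, Tendsto (fun t => (f (x + t • ζ₂ x) - f x) / t)
      (𝓝[≠] (0:ℝ)) (𝓝 (G x)) := by
    filter_upwards [hae₂, hGeq] with x hx he
    rw [he]
    exact hquot ζ₂ x hx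
  have hbracket := bracket_tendsto hL hζ₂ hGmeas hdiff₁ hconv
  have hae₁ := hdiff₁ f ⟨L, hL⟩
  filter_upwards [hae₁, hbracket, hGeq] with x h1 hbx hGx
  have hq1 : Tendsto (fun t => (f (x + t • ζ₁ x) - f x) / t) (𝓝[≠] (0:ℝ))
      (𝓝 (lineDeriv ℝ f x (ζ₁ x))) := hquot ζ₁ x h1
  have hsum := hq1.add hbx
  have hT : Tendsto (fun t => (f (x + t • (ζ₁ x + ζ₂ x)) - f x) / t) (𝓝[≠] (0:ℝ))
      (𝓝 (lineDeriv ℝ f x (ζ₁ x) + G x)) := by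
    apply hsum.congr
    intro t
    rw [← add_div, smul_add, ← add_assoc]
    congr 1
    ring
  have hD : HasDerivAt (fun t : ℝ => f (x + t • (ζ₁ x + ζ₂ x)))
      (lineDeriv ℝ f x (ζ₁ x) + G x) 0 := by
    apply hasDerivAt_iff_tendsto_quot.2
    simpa only [zero_smul, add_zero] using hT
  constructor
  · exact hD.differentiableAt
  · have heq : lineDeriv ℝ f x (ζ₁ x + ζ₂ x)
        = deriv (fun t : ℝ => f (x + t • (ζ₁ x + ζ₂ x))) 0 := rfl
    rw [heq, hD.deriv, hGx]
end

section
/- Let K ⊂ ℝ be a compact set and γ : K → ℝ^n a Lipschitz map. Then there exists a Borel map 𝔳 : ℝ^n → ℝ^n such that for H^1⌞γ(K)-almost every x ∈ ℝ^n the following holds: 𝔳(x) ≠ 0 and there exists t ∈ K with γ(t) = x such that the derivative of γ at t within K exists and equals 𝔳(x), i.e., lim_{s→t, s∈K\{t}} (γ(s) − γ(t))/(s − t) = 𝔳(x). -/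
open MeasureTheory Filter
open scoped NNReal
open Set
open scoped ENNReal
/-- Sard-type lemma: the image under `f` of a bounded set of points where `f` has
zero derivative is `H¹`-null. -/
theorem sard_zero_deriv {F : Type*} [NormedAddCommGroup F] [NormedSpace ℝ F]
    [MeasurableSpace F] [BorelSpace F]
    {f : ℝ → F} {Z : Set ℝ} {R : ℝ} (hZb : Z ⊆ Icc (-R) R)
    (hZ : ∀ t ∈ Z, HasDerivAt f 0 t) : μH[1] (f '' Z) = 0 := by
  set C : ℝ≥0∞ := ENNReal.ofReal (2 * R) with hC
  have hCne : C ≠ ∞ := ENNReal.ofReal_ne_top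
  -- main estimate
  have key : ∀ ε : ℝ≥0, 0 < ε → μH[1] (f '' Z) ≤ (ε : ℝ≥0∞) * C := by
    intro ε hε
    set Zk : ℕ → Set ℝ := fun k =>
      {t ∈ Z | ∀ s : ℝ, |s - t| ≤ ((k : ℝ) + 1)⁻¹ → ‖f s - f t‖ ≤ (ε : ℝ) * |s - t|} with hZk
    have hmono : Monotone Zk := by
      intro k k' hkk' t ht
      refine ⟨ht.1, fun s hs => ht.2 s (hs.trans ?_)⟩
      apply inv_anti₀ (by positivity)
      have : (k : ℝ) ≤ (k' : ℝ) := Nat.cast_le.mpr hkk'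
      linarith
    have hcover : Z = ⋃ k, Zk k := by
      apply Subset.antisymm
      · intro t ht
        have h1 : (fun s => f s - f t - (s - t) • (0 : F)) =o[nhds t] fun s => s - t :=
          hasDerivAt_iff_isLittleO.mp (hZ t ht)
        simp only [smul_zero, sub_zero] at h1
        have h2 := (Asymptotics.isLittleO_iff.mp h1) (show (0:ℝ) < (ε:ℝ) from hε)
        rw [Metric.eventually_nhds_iff] at h2
        obtain ⟨δ, hδ, hδ'⟩ := h2
        obtain ⟨k, hk⟩ := exists_nat_one_div_lt (K := ℝ) hδ
        refine mem_iUnion.mpr ⟨k, ht, fun s hs => ?_⟩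
        have : dist s t < δ := by
          rw [Real.dist_eq]
          refine lt_of_le_of_lt hs ?_
          rw [one_div] at hk; exact hk
        simpa [Real.norm_eq_abs] using hδ' this
      · exact iUnion_subset fun k => sep_subset _ _
    -- measure of each piece
    have hk_bound : ∀ k : ℕ, μH[1] (f '' Zk k) ≤ (ε : ℝ≥0∞) * C := by
      intro k
      set δ : ℝ := ((k : ℝ) + 1)⁻¹ with hδdef
      have hδpos : 0 < δ := by positivity
      set I : ℤ → Set ℝ := fun j => Ico ((j : ℝ) * δ) (((j : ℝ) + 1) * δ) with hI
      have hIunion : (⋃ j : ℤ, I j) = univ := by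
        refine eq_univ_of_forall fun t => mem_iUnion.mpr ⟨⌊t / δ⌋, ?_⟩
        constructor
        · calc (⌊t / δ⌋ : ℝ) * δ ≤ (t / δ) * δ := by
                exact mul_le_mul_of_nonneg_right (Int.floor_le _) hδpos.le
            _ = t := div_mul_cancel₀ t hδpos.ne'
        · calc t = (t / δ) * δ := (div_mul_cancel₀ t hδpos.ne').symm
            _ < ((⌊t / δ⌋ : ℝ) + 1) * δ :=
                mul_lt_mul_of_pos_right (Int.lt_floor_add_one _) hδpos
      have hsub : f '' Zk k ⊆ ⋃ j : ℤ, f '' (Zk k ∩ I j) := by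
        rw [← image_iUnion, ← inter_iUnion, hIunion, inter_univ]
      refine (measure_mono hsub).trans ((measure_iUnion_le _).trans ?_)
      have hpiece : ∀ j : ℤ, μH[1] (f '' (Zk k ∩ I j)) ≤
          (ε : ℝ≥0∞) * volume (Icc (-R) R ∩ I j) := by
        intro j
        have hlip : LipschitzOnWith ε f (Zk k ∩ I j) := by
          apply LipschitzOnWith.of_dist_le_mul
          intro x hx y hy
          have hxy : |x - y| ≤ δ := by
            rcases hx.2 with ⟨hx1, hx2⟩
            rcases hy.2 with ⟨hy1, hy2⟩
            rw [abs_sub_le_iff]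
            constructor <;> nlinarith
          have := hy.1.2 x hxy
          rw [dist_eq_norm, dist_eq_norm]
          rw [Real.norm_eq_abs]
          exact this
        calc μH[1] (f '' (Zk k ∩ I j)) ≤ (ε : ℝ≥0∞) ^ (1 : ℝ) * μH[1] (Zk k ∩ I j) :=
              hlip.hausdorffMeasure_image_le zero_le_one
          _ = (ε : ℝ≥0∞) * μH[1] (Zk k ∩ I j) := by rw [ENNReal.rpow_one]
          _ ≤ (ε : ℝ≥0∞) * volume (Icc (-R) R ∩ I j) := by
              rw [MeasureTheory.hausdorffMeasure_real]
              exact mul_le_mul_right (measure_mono (inter_subset_inter_left _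
                (fun t ht => hZb ht.1))) _
      refine (ENNReal.tsum_le_tsum hpiece).trans ?_
      rw [ENNReal.tsum_mul_left]
      apply mul_le_mul_right
      have hdisj : Pairwise (Function.onFun Disjoint fun j : ℤ => Icc (-R) R ∩ I j) := by
        intro j j' hjj'
        apply Disjoint.inter_left' ; apply Disjoint.inter_right'
        rw [Set.Ico_disjoint_Ico]
        rcases lt_or_gt_of_ne hjj' with h | h
        · have : (j : ℝ) + 1 ≤ (j' : ℝ) := by exact_mod_cast h
          refine le_trans (min_le_left _ _) (le_trans ?_ (le_max_right _ _))
          exact mul_le_mul_of_nonneg_right this hδpos.le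
        · have : (j' : ℝ) + 1 ≤ (j : ℝ) := by exact_mod_cast h
          refine le_trans (min_le_right _ _) (le_trans ?_ (le_max_left _ _))
          exact mul_le_mul_of_nonneg_right this hδpos.le
      have hms : ∀ j : ℤ, MeasurableSet (Icc (-R) R ∩ I j) :=
        fun j => measurableSet_Icc.inter measurableSet_Ico
      rw [← measure_iUnion hdisj hms, ← inter_iUnion, hIunion, inter_univ,
        Real.volume_Icc]
      apply le_of_eq
      congr 1
      ring
    calc μH[1] (f '' Z) = ⨆ k, μH[1] (f '' Zk k) := by
          rw [hcover, image_iUnion]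
          exact Monotone.measure_iUnion fun k k' h => image_mono (hmono h)
      _ ≤ (ε : ℝ≥0∞) * C := iSup_le hk_bound
  -- conclude by letting ε → 0
  have hlim : Tendsto (fun m : ℕ => (((m : ℝ≥0) + 1)⁻¹ : ℝ≥0∞) * C) atTop (nhds 0) := by
    have h1 : Tendsto (fun m : ℕ => (((m : ℝ≥0) + 1)⁻¹ : ℝ≥0∞)) atTop (nhds 0) := by
      have := ENNReal.tendsto_inv_nat_nhds_zero.comp (tendsto_add_atTop_nat 1)
      convert this using 2 with m
      push_cast
      norm_num
    simpa using ENNReal.Tendsto.mul_const h1 (Or.inr hCne)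
  refine le_antisymm (ge_of_tendsto' hlim fun m => ?_) zero_le
  have h := key ((m : ℝ≥0) + 1)⁻¹ (by positivity)
  rwa [ENNReal.coe_inv (by positivity), ENNReal.coe_add, ENNReal.coe_one,
    ENNReal.coe_natCast] at h

/-- Measurable selection of a nonzero tangent vector: for a Lipschitz fragment
`γ : K → ℝⁿ` there is a Borel map `v` such that at `H¹⌞γ(K)`-a.e. point `x` of the image,
`v(x) ≠ 0` and `v(x)` is the derivative of `γ` within `K` at some preimage of `x`. -/
theorem stmt_14 {n : ℕ} (K : Set ℝ) (hK : IsCompact K)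
    (γ : ℝ → EuclideanSpace ℝ (Fin n)) (hγ : ∃ L : ℝ≥0, LipschitzOnWith L γ K) :
    ∃ v : EuclideanSpace ℝ (Fin n) → EuclideanSpace ℝ (Fin n), Measurable v ∧
      ∀ᵐ x ∂((μH[1]).restrict (γ '' K)), v x ≠ 0 ∧ ∃ t ∈ K, γ t = x ∧
        Tendsto (fun s : ℝ => (s - t)⁻¹ • (γ s - γ t)) (nhdsWithin t (K \ {t}))
          (nhds (v x)) := by
  classical
  obtain ⟨L, hL⟩ := hγ
  -- Extend `γ` to a Lipschitz function `f` on all of `ℝ`.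
  set e : EuclideanSpace ℝ (Fin n) ≃L[ℝ] (Fin n → ℝ) := EuclideanSpace.equiv (Fin n) ℝ with he
  have h1 : LipschitzOnWith (‖(e : EuclideanSpace ℝ (Fin n) →L[ℝ] (Fin n → ℝ))‖₊ * L)
      (fun t => e (γ t)) K := e.toContinuousLinearMap.lipschitz.comp_lipschitzOnWith hL
  obtain ⟨g, hg, hgEq⟩ := h1.extend_pi
  set f : ℝ → EuclideanSpace ℝ (Fin n) := fun t => e.symm (g t) with hfdef
  obtain ⟨M, hM⟩ : ∃ M : ℝ≥0, LipschitzWith M f :=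
    ⟨_, e.symm.toContinuousLinearMap.lipschitz.comp hg⟩
  have hfK : EqOn γ f K := by
    intro t ht
    simp only [hfdef, ← hgEq ht]
    simp [he]
  have hfc : Continuous f := hM.continuous
  have himg : γ '' K = f '' K := image_congr hfK
  obtain ⟨R, hKR⟩ : ∃ R, K ⊆ Icc (-R) R := by
    obtain ⟨a, b, hab⟩ := bddBelow_bddAbove_iff_subset_Icc.mp ⟨hK.bddBelow, hK.bddAbove⟩
    exact ⟨max (-a) b, hab.trans (Icc_subset_Icc (by simp [neg_le]) (le_max_right _ _))⟩
  set Z : Set ℝ := {t ∈ K | DifferentiableAt ℝ f t ∧ deriv f t = 0} with hZdef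
  set τ : EuclideanSpace ℝ (Fin n) → ℝ := fun x => sInf (K ∩ f ⁻¹' {x}) with hτdef
  -- properties of τ
  have factA : ∀ x ∈ f '' K, τ x ∈ K ∧ f (τ x) = x := by
    intro x hx
    obtain ⟨t, htK, htx⟩ := hx
    have hne : (K ∩ f ⁻¹' {x}).Nonempty := ⟨t, htK, htx⟩
    have hcpt : IsCompact (K ∩ f ⁻¹' {x}) :=
      hK.inter_right (isClosed_singleton.preimage hfc)
    exact hcpt.sInf_mem hne
  have factB : ∀ x, x ∉ f '' K → K ∩ f ⁻¹' {x} = ∅ := by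
    intro x hx
    rw [eq_empty_iff_forall_notMem]
    rintro t ⟨htK, htx⟩
    exact hx ⟨t, htK, htx⟩
  have hτ : Measurable τ := by
    apply measurable_of_Iic
    intro a
    have : τ ⁻¹' Iic a = f '' (K ∩ Iic a) ∪ ((f '' K)ᶜ ∩ {x | (0:ℝ) ≤ a}) := by
      ext x
      simp only [mem_preimage, mem_Iic, mem_union, mem_inter_iff, mem_compl_iff,
        mem_setOf_eq]
      constructor
      · intro h
        by_cases hx : x ∈ f '' K
        · obtain ⟨hτK, hτx⟩ := factA x hx
          exact Or.inl ⟨τ x, ⟨hτK, h⟩, hτx⟩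
        · refine Or.inr ⟨hx, ?_⟩
          have : τ x = 0 := by rw [hτdef]; simp only []; rw [factB x hx, Real.sInf_empty]
          rwa [this] at h
      · rintro (⟨t, ⟨htK, hta⟩, rfl⟩ | ⟨hx, h0⟩)
        · exact le_trans (csInf_le (hK.bddBelow.mono inter_subset_left) ⟨htK, rfl⟩) hta
        · have : τ x = 0 := by rw [hτdef]; simp only []; rw [factB x hx, Real.sInf_empty]
          rw [this]; exact h0
    rw [this]
    refine MeasurableSet.union ?_ (MeasurableSet.inter ?_ ?_)
    · exact ((hK.inter_right isClosed_Iic).image_of_continuousOn hfc.continuousOn).isClosed.measurableSet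
    · exact ((hK.image hfc).isClosed.measurableSet).compl
    · by_cases h0 : (0:ℝ) ≤ a
      · simp [h0]
      · simp [h0]
  set S : Set (EuclideanSpace ℝ (Fin n)) := (f '' K) ∩ {x | deriv f (τ x) ≠ 0} with hSdef
  have hSm : MeasurableSet S := by
    refine ((hK.image hfc).isClosed.measurableSet).inter ?_
    have : {x : EuclideanSpace ℝ (Fin n) | deriv f (τ x) ≠ 0} =
        (fun x => deriv f (τ x)) ⁻¹' ({0}ᶜ) := rfl
    rw [this]
    exact ((measurable_deriv f).comp hτ) (measurableSet_singleton 0).compl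
  refine ⟨S.piecewise (fun x => deriv f (τ x)) (fun _ => 0), Measurable.piecewise hSm
    ((measurable_deriv f).comp hτ) measurable_const, ?_⟩
  -- the two null sets
  have hnull1 : μH[1] (f '' {t ∈ K | ¬ DifferentiableAt ℝ f t}) = 0 := by
    have hvol : volume {t : ℝ | ¬ DifferentiableAt ℝ f t} = 0 := by
      have := hM.ae_differentiableAt (μ := volume)
      rwa [ae_iff] at this
    have h1 : μH[1] {t ∈ K | ¬ DifferentiableAt ℝ f t} = 0 := by
      rw [MeasureTheory.hausdorffMeasure_real]
      exact measure_mono_null (fun t ht => ht.2) hvol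
    have := hM.hausdorffMeasure_image_le zero_le_one {t ∈ K | ¬ DifferentiableAt ℝ f t}
    rw [h1, mul_zero] at this
    exact le_antisymm this zero_le
  have hnull2 : μH[1] (f '' Z) = 0 := by
    refine sard_zero_deriv (fun t ht => hKR ht.1) ?_
    intro t ht
    rw [← ht.2.2]
    exact ht.2.1.hasDerivAt
  -- the good points
  have hgood : ∀ x, x ∈ f '' K → x ∉ f '' {t ∈ K | ¬ DifferentiableAt ℝ f t} →
      x ∉ f '' Z →
      (S.piecewise (fun x => deriv f (τ x)) (fun _ => 0)) x ≠ 0 ∧ ∃ t ∈ K, γ t = x ∧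
        Tendsto (fun s : ℝ => (s - t)⁻¹ • (γ s - γ t)) (nhdsWithin t (K \ {t}))
          (nhds ((S.piecewise (fun x => deriv f (τ x)) (fun _ => 0)) x)) := by
    intro x hx hx1 hx2
    obtain ⟨hτK, hτx⟩ := factA x hx
    have hD : DifferentiableAt ℝ f (τ x) := by
      by_contra h
      exact hx1 ⟨τ x, ⟨hτK, h⟩, hτx⟩
    have hd0 : deriv f (τ x) ≠ 0 := by
      intro h
      exact hx2 ⟨τ x, ⟨hτK, hD, h⟩, hτx⟩
    have hxS : x ∈ S := ⟨hx, hd0⟩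
    have hvx : (S.piecewise (fun x => deriv f (τ x)) (fun _ => 0)) x = deriv f (τ x) :=
      Set.piecewise_eq_of_mem _ _ _ hxS
    refine ⟨by rw [hvx]; exact hd0, τ x, hτK, by rw [hfK hτK]; exact hτx, ?_⟩
    have h1 : Tendsto (slope f (τ x)) (nhdsWithin (τ x) {τ x}ᶜ)
        (nhds (deriv f (τ x))) := hasDerivAt_iff_tendsto_slope.mp hD.hasDerivAt
    have h2 : Tendsto (slope f (τ x)) (nhdsWithin (τ x) (K \ {τ x}))
        (nhds ((S.piecewise (fun x => deriv f (τ x)) (fun _ => 0)) x)) := by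
      rw [hvx]
      exact h1.mono_left (nhdsWithin_mono _ (fun s hs => hs.2))
    refine Tendsto.congr' ?_ h2
    filter_upwards [self_mem_nhdsWithin] with s hs
    rw [slope_def_module, hfK hs.1, hfK hτK]
  -- conclude
  rw [himg, Filter.eventually_iff, mem_ae_iff]
  have hbad : ((μH[1]).restrict (f '' K))
      ((f '' {t ∈ K | ¬ DifferentiableAt ℝ f t} ∪ f '' Z) ∪ (f '' K)ᶜ) = 0 := by
    refine le_antisymm (le_trans (measure_union_le _ _) ?_) zero_le
    have hb1 : ((μH[1]).restrict (f '' K))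
        (f '' {t ∈ K | ¬ DifferentiableAt ℝ f t} ∪ f '' Z) = 0 := by
      refine le_antisymm ?_ zero_le
      refine le_trans (Measure.le_iff'.mp Measure.restrict_le_self _) ?_
      refine le_trans (measure_union_le _ _) ?_
      rw [hnull1, hnull2, add_zero]
    have hb2 : ((μH[1]).restrict (f '' K)) ((f '' K)ᶜ) = 0 := by
      rw [Measure.restrict_apply' ((hK.image hfc).isClosed.measurableSet),
        compl_inter_self, measure_empty]
    rw [hb1, hb2, add_zero]
  refine measure_mono_null ?_ hbad
  intro x hx
  by_contra h
  simp only [mem_union, not_or] at h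
  exact hx (hgood x (not_not.mp h.2) h.1.1 h.1.2)
end

section
/- Let E be a finite-dimensional real inner product space (e.g. Euclidean ℝ^n). For x ∈ ℝ^n let V(x) and W(x) be linear subspaces of E, and suppose that the maps x ↦ P_{V(x)} and x ↦ P_{W(x)}, from ℝ^n into the space of continuous linear endomorphisms of E equipped with the operator norm, are Borel measurable, where P_U denotes the orthogonal projection onto a subspace U. Then the map x ↦ P_{V(x) ∩ W(x)}, assigning to x the orthogonal projection onto the intersection V(x) ∩ W(x), is Borel measurable. -/
/-!
The average `T = (P_V + P_W) / 2` of two orthogonal projections is a contraction whose fixed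
vectors are exactly `V ∩ W`: if `T x = x` then `2 ‖x‖ ≤ ‖P_V x‖ + ‖P_W x‖`, which forces
`‖P_V x‖ = ‖P_W x‖ = ‖x‖`. By von Neumann's mean ergodic theorem the Cesàro means of the powers
of `T` converge to `P_{V ∩ W}` pointwise, hence in operator norm since `E` is finite-dimensional.
These means are continuous functions of `T`, so `x ↦ P_{V(x) ∩ W(x)}` is a pointwise limit of
measurable maps.
-/

open MeasureTheory Filter Finset
open scoped Topology

theorem ContinuousLinearMap.tendsto_of_tendsto_apply {𝕜 E F ι : Type*} [NontriviallyNormedField 𝕜]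
    [CompleteSpace 𝕜] [NormedAddCommGroup E] [NormedSpace 𝕜 E] [FiniteDimensional 𝕜 E]
    [NormedAddCommGroup F] [NormedSpace 𝕜 F] {l : Filter ι} {A : ι → E →L[𝕜] F} {B : E →L[𝕜] F}
    (h : ∀ x, Tendsto (fun i => A i x) l (𝓝 (B x))) : Tendsto A l (𝓝 B) := by
  let v := Module.finBasis 𝕜 E
  have hsum : Tendsto (fun i => ∑ j, ‖(A i - B) (v j)‖) l (𝓝 0) := by
    simpa using tendsto_finsetSum univ fun j _ => tendsto_iff_norm_sub_tendsto_zero.mp (h (v j))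
  rw [tendsto_iff_norm_sub_tendsto_zero]
  have hle (i) (j) : ‖(A i - B) (v j)‖ ≤ ∑ j, ‖(A i - B) (v j)‖ :=
    single_le_sum (f := fun j => ‖(A i - B) (v j)‖) (fun _ _ => norm_nonneg _) (mem_univ j)
  exact squeeze_zero (fun _ => norm_nonneg _) (fun i => v.opNorm_le (by positivity) (hle i))
    (by simpa using hsum.const_mul _)

section

variable {𝕜 E : Type*} [RCLike 𝕜] [NormedAddCommGroup E] [InnerProductSpace 𝕜 E]

theorem ContinuousLinearMap.tendsto_cesaroMean_pow_starProjection [FiniteDimensional 𝕜 E]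
    (T : E →L[𝕜] E) (hT : ‖T‖ ≤ 1) :
    Tendsto (fun k : ℕ => (k : 𝕜)⁻¹ • ∑ j ∈ range k, T ^ j) atTop
      (𝓝 (T.eqLocus (1 : E →L[𝕜] E)).starProjection) := by
  have := FiniteDimensional.complete 𝕜 E
  refine ContinuousLinearMap.tendsto_of_tendsto_apply fun x => ?_
  convert T.tendsto_birkhoffAverage_orthogonalProjection hT x using 2 with k
  · simp [birkhoffAverage, birkhoffSum]
  · rfl

variable (V W : Submodule 𝕜 E) [V.HasOrthogonalProjection] [W.HasOrthogonalProjection]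

theorem Submodule.norm_half_smul_starProjection_add_le :
    ‖(2⁻¹ : 𝕜) • (V.starProjection + W.starProjection)‖ ≤ 1 := by
  calc ‖(2⁻¹ : 𝕜) • (V.starProjection + W.starProjection)‖
      ≤ 2⁻¹ * (‖V.starProjection‖ + ‖W.starProjection‖) := by
        rw [norm_smul, norm_inv, RCLike.norm_ofNat]; gcongr; exact norm_add_le _ _
    _ ≤ 1 := by linarith [V.starProjection_norm_le, W.starProjection_norm_le]

theorem Submodule.eqLocus_half_smul_starProjection_add :
    ((2⁻¹ : 𝕜) • (V.starProjection + W.starProjection)).eqLocus (1 : E →L[𝕜] E) =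
      V ⊓ W := by
  ext x
  simp only [LinearMap.mem_eqLocus, Submodule.mem_inf]
  constructor
  · intro hx
    have hsum : V.starProjection x + W.starProjection x = (2 : 𝕜) • x := by
      simp only [ContinuousLinearMap.coe_coe, smul_apply, add_apply,
        one_apply_eq_self] at hx
      conv_rhs => rw [← hx, smul_smul]
      norm_num
    have hV := V.norm_starProjection_apply_le x
    have hW := W.norm_starProjection_apply_le x
    have htri : 2 * ‖x‖ ≤ ‖V.starProjection x‖ + ‖W.starProjection x‖ := by
      simpa [hsum, norm_smul] using norm_add_le (V.starProjection x) (W.starProjection x)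
    exact ⟨(V.mem_iff_norm_starProjection x).2 (by linarith),
      (W.mem_iff_norm_starProjection x).2 (by linarith)⟩
  · rintro ⟨hV, hW⟩
    simp only [ContinuousLinearMap.coe_coe, smul_apply, add_apply,
      one_apply_eq_self, V.starProjection_eq_self_iff.2 hV,
      W.starProjection_eq_self_iff.2 hW]
    module

end

/-- Borel measurability of the intersection of two Borel distributions of subspaces:
if the fields of orthogonal projections onto `V(x)` and `W(x)` are Borel measurable (as maps
into the endomorphisms of `E` with the operator norm), so is the field of orthogonal
projections onto `V(x) ∩ W(x)`. -/
theorem stmt_15 {n : ℕ} {E : Type*} [NormedAddCommGroup E] [InnerProductSpace ℝ E]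
    [FiniteDimensional ℝ E]
    (V W : EuclideanSpace ℝ (Fin n) → Submodule ℝ E)
    (hV : Measurable fun x => (V x).subtypeL.comp (Submodule.orthogonalProjectionOnto (V x)))
    (hW : Measurable fun x => (W x).subtypeL.comp (Submodule.orthogonalProjectionOnto (W x))) :
    Measurable fun x => (V x ⊓ W x).subtypeL.comp (Submodule.orthogonalProjectionOnto (V x ⊓ W x)) := by
  let T : EuclideanSpace ℝ (Fin n) → E →L[ℝ] E :=
    fun x => (2⁻¹ : ℝ) • ((V x).starProjection + (W x).starProjection)
  have hT : Measurable T := (hV.add hW).const_smul (2⁻¹ : ℝ)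
  have hmean (k : ℕ) : Measurable fun x => (k : ℝ)⁻¹ • ∑ j ∈ range k, T x ^ j := by
    have : Continuous fun S : E →L[ℝ] E => (k : ℝ)⁻¹ • ∑ j ∈ range k, S ^ j := by fun_prop
    exact this.measurable.comp hT
  refine measurable_of_tendsto_metrizable' atTop hmean (tendsto_pi_nhds.2 fun x => ?_)
  have hlim := (T x).tendsto_cesaroMean_pow_starProjection
    (Submodule.norm_half_smul_starProjection_add_le (V x) (W x))
  rwa [Submodule.eqLocus_half_smul_starProjection_add] at hlim
end

section
/- Let (α, 𝒜) be a measurable space, let E be a finite-dimensional real inner product space, and let ζ₁, …, ζ_m : α → E be measurable maps. Then there exist measurable maps ω₁, …, ω_m : α → E such that for every x ∈ α: (a) each ω_i(x) is either the zero vector or a unit vector; (b) ⟨ω_i(x), ω_j(x)⟩ = 0 whenever i ≠ j; (c) span{ω₁(x), …, ω_m(x)} = span{ζ₁(x), …, ζ_m(x)}. In particular, the nonzero vectors among ω₁(x), …, ω_m(x) form an orthonormal basis of span{ζ₁(x), …, ζ_m(x)}, and the orthogonal projection onto this span equals Σ_i ω_i(x) ⊗ ω_i(x). -/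
open InnerProductSpace Finset

theorem gramSchmidtNormed_orthogonal {𝕜 E ι : Type*} [RCLike 𝕜] [NormedAddCommGroup E]
    [InnerProductSpace 𝕜 E] [LinearOrder ι] [LocallyFiniteOrderBot ι] [WellFoundedLT ι]
    (f : ι → E) {a b : ι} (h : a ≠ b) :
    inner 𝕜 (gramSchmidtNormed 𝕜 f a) (gramSchmidtNormed 𝕜 f b) = 0 := by
  simp [gramSchmidtNormed, inner_smul_left, inner_smul_right, gramSchmidt_orthogonal 𝕜 f h]

section Measurable

variable {α 𝕜 E ι : Type*} [MeasurableSpace α] [RCLike 𝕜]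
  [NormedAddCommGroup E] [InnerProductSpace 𝕜 E] [MeasurableSpace E] [BorelSpace E]
  [SecondCountableTopology E] [LinearOrder ι] [LocallyFiniteOrderBot ι] [WellFoundedLT ι]
  {f : ι → α → E}

/- The projection onto `𝕜 ∙ v` is discontinuous in `v` at `v = 0`, but its closed form
`(⟪v, w⟫ / ‖v‖ ^ 2) • v` is built from measurable operations (and is `0` at `v = 0`). -/
theorem measurable_gramSchmidt (hf : ∀ i, Measurable (f i)) (n : ι) :
    Measurable fun x => gramSchmidt 𝕜 (f · x) n := by
  induction n using WellFoundedLT.induction with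
  | ind n ih =>
    have hformula : (fun x => gramSchmidt 𝕜 (f · x) n) = fun x => f n x - ∑ i ∈ Iio n,
        (inner 𝕜 (gramSchmidt 𝕜 (f · x) i) (f n x) / (‖gramSchmidt 𝕜 (f · x) i‖ : 𝕜) ^ 2) •
          gramSchmidt 𝕜 (f · x) i :=
      funext fun x => eq_sub_of_add_eq (gramSchmidt_def'' 𝕜 (f · x) n).symm
    rw [hformula]
    refine (hf n).sub (Finset.measurable_sum _ fun i hi => ?_)
    have := ih i (mem_Iio.mp hi)
    fun_prop

theorem measurable_gramSchmidtNormed (hf : ∀ i, Measurable (f i)) (n : ι) :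
    Measurable fun x => gramSchmidtNormed 𝕜 (f · x) n := by
  have := measurable_gramSchmidt (𝕜 := 𝕜) hf n
  unfold gramSchmidtNormed
  fun_prop

end Measurable

/-- Measurable Gram–Schmidt orthonormalization: given measurable maps `ζ₁,…,ζ_m` into a
finite-dimensional real inner product space, there are measurable maps `ω₁,…,ω_m` whose values
are pairwise orthogonal, each either zero or of unit norm, and which pointwise span the same
subspace as the `ζᵢ`. -/
theorem stmt_16 {α : Type*} [MeasurableSpace α] {E : Type*}
    [NormedAddCommGroup E] [InnerProductSpace ℝ E] [FiniteDimensional ℝ E]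
    [MeasurableSpace E] [BorelSpace E]
    {m : ℕ} (ζ : Fin m → α → E) (hζ : ∀ i, Measurable (ζ i)) :
    ∃ ω : Fin m → α → E, (∀ i, Measurable (ω i)) ∧ ∀ x : α,
      (∀ i, ω i x = 0 ∨ ‖ω i x‖ = 1) ∧
      (∀ i j, i ≠ j → (inner ℝ (ω i x) (ω j x) : ℝ) = 0) ∧
      Submodule.span ℝ (Set.range fun i => ω i x)
        = Submodule.span ℝ (Set.range fun i => ζ i x) :=
  ⟨fun i x => gramSchmidtNormed ℝ (ζ · x) i, measurable_gramSchmidtNormed hζ,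
    fun _ => ⟨fun _ => (em _).imp_right gramSchmidtNormed_unit_length',
      fun _ _ => gramSchmidtNormed_orthogonal _,
      (span_gramSchmidtNormed_range _).trans (span_gramSchmidt ℝ _)⟩⟩
end

section
/- Let (f_k) be a sequence of locally integrable functions ℝ^n → ℝ satisfying: (i) for every continuous compactly supported φ : ℝ^n → ℝ, ∫ φ·f_k dL^n → 0 as k → ∞; (ii) f_k → 0 in measure, i.e., for every δ > 0, L^n({ x : |f_k(x)| > δ }) → 0; (iii) the negative parts f_k⁻ := max(−f_k, 0) are uniformly integrable on every ball: for every R > 0 and ε > 0 there exists δ > 0 such that for every k and every measurable set S ⊆ B(0,R) with L^n(S) < δ one has ∫_S f_k⁻ dL^n < ε. Then f_k → 0 in L¹_loc(ℝ^n), i.e., ∫_{B(0,R)} |f_k| dL^n → 0 for every R > 0. -/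
open MeasureTheory Filter

/-- If a sequence of locally integrable functions tends to `0` against continuous compactly
supported test functions, tends to `0` in measure, and has locally uniformly integrable
negative parts, then it tends to `0` in `L¹_loc`. -/
theorem stmt_18 {n : ℕ} (f : ℕ → EuclideanSpace ℝ (Fin n) → ℝ)
    (hloc : ∀ k, LocallyIntegrable (f k) volume)
    (h1 : ∀ φ : EuclideanSpace ℝ (Fin n) → ℝ, Continuous φ → HasCompactSupport φ →
      Tendsto (fun k => ∫ x, φ x * f k x) atTop (nhds 0))
    (h2 : ∀ δ > (0:ℝ), Tendsto (fun k => volume {x | δ < |f k x|}) atTop (nhds 0))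
    (h3 : ∀ R > (0:ℝ), ∀ ε > (0:ℝ), ∃ δ > (0:ℝ), ∀ k : ℕ,
      ∀ S ⊆ Metric.closedBall (0 : EuclideanSpace ℝ (Fin n)) R, MeasurableSet S →
        volume S < ENNReal.ofReal δ → ∫ x in S, max (-(f k x)) 0 < ε) :
    ∀ R > (0:ℝ),
      Tendsto (fun k => ∫ x in Metric.closedBall (0 : EuclideanSpace ℝ (Fin n)) R, |f k x|)
        atTop (nhds 0) := by

  set g : ℕ → EuclideanSpace ℝ (Fin n) → ℝ := fun k x => max (-(f k x)) 0 with hgdef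
  have hE : ∀ (k : ℕ) (R : ℝ), IntegrableOn (f k) (Metric.closedBall (0:EuclideanSpace ℝ (Fin n)) R) volume :=
    fun k R => (hloc k).integrableOn_isCompact (isCompact_closedBall _ _)
  have hg_nonneg : ∀ k x, 0 ≤ g k x := fun k x => le_max_right _ _
  have hg_le : ∀ k x, g k x ≤ |f k x| := fun k x =>
    max_le (neg_le_abs _) (abs_nonneg _)
  have hgint : ∀ (k : ℕ) (R : ℝ), IntegrableOn (g k) (Metric.closedBall (0:EuclideanSpace ℝ (Fin n)) R) volume :=
    fun k R => (hE k R).neg_part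
  have hVfin : ∀ R : ℝ, volume (Metric.closedBall (0:EuclideanSpace ℝ (Fin n)) R) < ⊤ :=
    fun R => (isCompact_closedBall _ _).measure_lt_top
  -- measurable representatives
  have hFm : ∀ k, StronglyMeasurable ((hloc k).aestronglyMeasurable.mk (f k)) :=
    fun k => (hloc k).aestronglyMeasurable.stronglyMeasurable_mk
  have hFae : ∀ k, f k =ᵐ[volume] (hloc k).aestronglyMeasurable.mk (f k) :=
    fun k => (hloc k).aestronglyMeasurable.ae_eq_mk
  set F : ℕ → EuclideanSpace ℝ (Fin n) → ℝ := fun k => (hloc k).aestronglyMeasurable.mk (f k) with hFdef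
  -- Step 1: negative parts tend to 0 in L¹ on every ball
  have key : ∀ R > (0:ℝ),
      Tendsto (fun k => ∫ x in Metric.closedBall (0:EuclideanSpace ℝ (Fin n)) R, g k x) atTop (nhds 0) := by
    intro R hR
    rw [Metric.tendsto_atTop]
    intro ε hε
    obtain ⟨δ, hδ, hδ3⟩ := h3 R hR (ε/2) (by linarith)
    set V := (volume (Metric.closedBall (0:EuclideanSpace ℝ (Fin n)) R)).toReal with hVdef
    have hV0 : 0 ≤ V := ENNReal.toReal_nonneg
    set δ' : ℝ := (ε/2) / (V + 1) with hδ'def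
    have hδ' : 0 < δ' := by positivity
    have hmeas : ∀ k, volume {x | δ' < |F k x|} = volume {x | δ' < |f k x|} := by
      intro k
      apply measure_congr
      filter_upwards [hFae k] with x hx
      show (δ' < |F k x|) = (δ' < |f k x|)
      rw [hFdef]
      simp [hx]
    have hev : ∀ᶠ k in atTop, volume {x | δ' < |f k x|} < ENNReal.ofReal δ :=
      (h2 δ' hδ').eventually_lt_const (ENNReal.ofReal_pos.2 hδ)
    rw [eventually_atTop] at hev
    obtain ⟨N, hN⟩ := hev
    refine ⟨N, fun k hk => ?_⟩
    set B := Metric.closedBall (0:EuclideanSpace ℝ (Fin n)) R with hBdef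
    have hBmeas : MeasurableSet B := measurableSet_closedBall
    set S : Set (EuclideanSpace ℝ (Fin n)) := B ∩ {x | δ' < |F k x|} with hSdef
    have hSmeas : MeasurableSet S :=
      measurableSet_closedBall.inter
        (measurableSet_lt measurable_const (hFm k).measurable.abs)
    have hSsub : S ⊆ B := Set.inter_subset_left
    have hSvol : volume S < ENNReal.ofReal δ :=
      lt_of_le_of_lt (le_trans (measure_mono Set.inter_subset_right)
        (le_of_eq (hmeas k))) (hN k hk)
    have h1' : ∫ x in S, g k x < ε/2 := hδ3 k S hSsub hSmeas hSvol
    have h2' : ∫ x in B \ S, g k x ≤ δ' * V := by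
      have hb : ∀ᵐ x ∂(volume.restrict (B \ S)), ‖g k x‖ ≤ δ' := by
        filter_upwards [ae_restrict_mem (measurableSet_closedBall.diff hSmeas),
          ae_restrict_of_ae (hFae k)] with x hx hfx
        have hxB : x ∈ B := hx.1
        have hxS : ¬ (δ' < |F k x|) := fun h => hx.2 ⟨hxB, h⟩
        have : |f k x| ≤ δ' := by rw [hfx]; exact not_lt.1 hxS
        rw [Real.norm_eq_abs, abs_of_nonneg (hg_nonneg k x)]
        exact le_trans (hg_le k x) this
      have := norm_setIntegral_le_of_norm_le_const_ae
        (lt_of_le_of_lt (measure_mono Set.diff_subset) (hVfin R)) hb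
        (f := g k) (μ := volume)
      refine le_trans (le_trans (le_abs_self _) this) ?_
      gcongr
      exact ENNReal.toReal_mono (ne_of_lt (hVfin R)) (measure_mono Set.diff_subset)
    have hsplit : ∫ x in B, g k x = (∫ x in S, g k x) + ∫ x in B \ S, g k x := by
      have hu := setIntegral_union (f := g k) (μ := volume)
        (disjoint_sdiff_self_right (x := S) (y := B)) (hBmeas.diff hSmeas)
        ((hgint k R).mono_set hSsub) ((hgint k R).mono_set Set.diff_subset)
      rwa [Set.union_diff_cancel hSsub] at hu
    have hδ'V : δ' * V ≤ ε/2 := by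
      rw [hδ'def, div_mul_eq_mul_div, div_le_iff₀ (by linarith)]
      nlinarith
    have hnn : 0 ≤ ∫ x in B, g k x :=
      setIntegral_nonneg measurableSet_closedBall (fun x _ => hg_nonneg k x)
    rw [Real.dist_eq, sub_zero, abs_of_nonneg hnn]
    calc ∫ x in B, g k x = (∫ x in S, g k x) + ∫ x in B \ S, g k x := hsplit
      _ < ε/2 + ε/2 := by linarith
      _ = ε := by ring
  -- Step 2: main argument with a bump function
  intro R hR
  set B := Metric.closedBall (0:EuclideanSpace ℝ (Fin n)) R with hBdef
  set B' := Metric.closedBall (0:EuclideanSpace ℝ (Fin n)) (R+1) with hB'def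
  have hBmeas : MeasurableSet B := measurableSet_closedBall
  have hB'meas : MeasurableSet B' := measurableSet_closedBall
  have hBB' : B ⊆ B' := Metric.closedBall_subset_closedBall (by linarith)
  set φ : EuclideanSpace ℝ (Fin n) → ℝ := fun x => min 1 (max 0 (R + 1 - ‖x‖)) with hφdef
  have hφc : Continuous φ :=
    continuous_const.min (continuous_const.max (continuous_const.sub continuous_norm))
  have hφsupp : ∀ x ∉ B', φ x = 0 := by
    intro x hx
    have : R + 1 < ‖x‖ := by
      simpa [hB'def, Metric.mem_closedBall, dist_eq_norm] using hx
    simp only [hφdef]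
    rw [max_eq_left (by linarith), min_eq_right (by norm_num)]
  have hφcs : HasCompactSupport φ :=
    HasCompactSupport.intro (isCompact_closedBall (0:EuclideanSpace ℝ (Fin n)) (R+1)) hφsupp
  have hφ0 : ∀ x, 0 ≤ φ x := fun x => le_min (by norm_num) (le_max_left _ _)
  have hφle1 : ∀ x, φ x ≤ 1 := fun x => min_le_left _ _
  have hφ1 : ∀ x ∈ B, φ x = 1 := by
    intro x hx
    have : ‖x‖ ≤ R := by simpa [hBdef, Metric.mem_closedBall, dist_eq_norm] using hx
    simp only [hφdef]
    rw [max_eq_right (by linarith), min_eq_left (by linarith)]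
  -- pointwise: -(g k x) ≤ φ x * f k x
  have hpt : ∀ k x, -(g k x) ≤ φ x * f k x := by
    intro k x
    rcases le_or_gt 0 (f k x) with h | h
    · calc -(g k x) ≤ 0 := neg_nonpos.2 (hg_nonneg k x)
        _ ≤ φ x * f k x := mul_nonneg (hφ0 x) h
    · have hgx : g k x = -(f k x) := max_eq_left (by linarith)
      rw [hgx, neg_neg]
      nlinarith [hφle1 x, hφ0 x]
  have hφfint : ∀ k, IntegrableOn (fun x => φ x * f k x) B' volume := fun k =>
    Integrable.bdd_mul (c := 1) (hE k (R+1)) (hφc.aestronglyMeasurable.restrict)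
      (Eventually.of_forall fun x => by rw [Real.norm_eq_abs, abs_of_nonneg (hφ0 x)]; exact hφle1 x)
  have hmono : ∀ (k : ℕ) (s : Set (EuclideanSpace ℝ (Fin n))), s ⊆ B' → ∫ x in s, g k x ≤ ∫ x in B', g k x := by
    intro k s hs
    exact setIntegral_mono_set (hgint k (R+1))
      (Eventually.of_forall (fun x => hg_nonneg k x)) (HasSubset.Subset.eventuallyLE hs)
  -- key upper bound
  have hbound : ∀ k, ∫ x in B, |f k x| ≤
      (∫ x, φ x * f k x) + 3 * ∫ x in B', g k x := by
    intro k
    have e1 : ∫ x in B, |f k x| = (∫ x in B, f k x) + 2 * ∫ x in B, g k x := by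
      rw [← integral_const_mul, ← integral_add (hE k R) ((hgint k R).const_mul 2)]
      apply setIntegral_congr_fun hBmeas
      intro x _
      show |f k x| = f k x + 2 * g k x
      rcases le_or_gt 0 (f k x) with h | h
      · simp [hgdef, abs_of_nonneg h, max_eq_right (neg_nonpos.2 h)]
      · simp only [hgdef]
        rw [abs_of_neg h, max_eq_left (by linarith)]
        ring
    have e2 : ∫ x, φ x * f k x = ∫ x in B', φ x * f k x :=
      (setIntegral_eq_integral_of_forall_compl_eq_zero fun x hx => by
        rw [hφsupp x hx, zero_mul]).symm
    have e3 : ∫ x in B', φ x * f k x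
        = (∫ x in B, φ x * f k x) + ∫ x in B' \ B, φ x * f k x := by
      have hu := setIntegral_union (f := fun x => φ x * f k x) (μ := volume)
        (disjoint_sdiff_self_right (x := B) (y := B')) (hB'meas.diff hBmeas)
        ((hφfint k).mono_set hBB') ((hφfint k).mono_set Set.diff_subset)
      rwa [Set.union_diff_cancel hBB'] at hu
    have e4 : ∫ x in B, φ x * f k x = ∫ x in B, f k x := by
      apply setIntegral_congr_fun hBmeas
      intro x hx
      show φ x * f k x = f k x
      rw [hφ1 x hx, one_mul]
    have e5 : -(∫ x in B', g k x) ≤ ∫ x in B' \ B, φ x * f k x := by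
      have h51 : ∫ x in B' \ B, -(g k x) ≤ ∫ x in B' \ B, φ x * f k x :=
        setIntegral_mono_on (((hgint k (R+1)).mono_set Set.diff_subset).neg)
          ((hφfint k).mono_set Set.diff_subset)
          (hB'meas.diff hBmeas)
          (fun x _ => hpt k x)
      rw [integral_neg] at h51
      have h52 : ∫ x in B' \ B, g k x ≤ ∫ x in B', g k x :=
        hmono k _ Set.diff_subset
      linarith
    have e6 : ∫ x in B, g k x ≤ ∫ x in B', g k x := hmono k _ hBB'
    have : ∫ x in B, f k x ≤ (∫ x, φ x * f k x) + ∫ x in B', g k x := by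
      rw [e2, e3, e4] at *
      linarith [e5]
    rw [e1]
    linarith
  -- squeeze
  have hnn : ∀ k, 0 ≤ ∫ x in B, |f k x| := fun k =>
    setIntegral_nonneg measurableSet_closedBall (fun x _ => abs_nonneg _)
  have hlim : Tendsto (fun k => (∫ x, φ x * f k x) + 3 * ∫ x in B', g k x)
      atTop (nhds 0) := by
    have := (h1 φ hφc hφcs).add ((key (R+1) (by linarith)).const_mul 3)
    simpa using this
  exact squeeze_zero hnn hbound hlim
end
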